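/- arXiv:1606.00269 — 8 statements merged into one kernel-verified Lean document; each statement's English description precedes it below -/
import Mathlib

section
/- Let f : ℝⁿ → ℝ be convex with L-Lipschitz gradient, achieving its minimum with S = Argmin f nonempty. If the gradient descent iterates x_{k+1} = x_k − h·∇f(x_k) with step size 0 < h ≤ (1−√τ)/L satisfy d(x_{k+1},S)² ≤ τ·d(x_k,S)² for all k, then for every k and every v ∈ proj_S(x_k): ⟨∇f(x_k), x_k − v⟩ ≥ ((1−τ)/(2h))·d(x_k,S)² + (h/2)·‖∇f(x_k)‖². -/
open scoped RealInnerProductSpace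

/-!
Co-coercivity of `∇f` against a minimizer `v` gives `‖∇f(x_k)‖² ≤ L ⟪∇f(x_k), x_k - v⟫`.
One gradient step moves `x_k` by `h ‖∇f(x_k)‖` while shrinking its distance `d` to `S` by the
factor `√τ`, so the triangle inequality gives `(1 - √τ) d ≤ h ‖∇f(x_k)‖`. Together with
`h L ≤ 1 - √τ` these two bounds combine into the claim.
-/

open Set Metric

section GradientInequalities

variable {E : Type*} [NormedAddCommGroup E] [InnerProductSpace ℝ E] [CompleteSpace E]
  {f : E → ℝ}

theorem HasGradientAt.hasDerivAt_comp_add_smul {g a u : E} {t : ℝ}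
    (hf : HasGradientAt f g (a + t • u)) :
    HasDerivAt (fun s : ℝ => f (a + s • u)) ⟪g, u⟫ t := by
  have hline : HasDerivAt (fun s : ℝ => a + s • u) u t := by
    simpa using ((hasDerivAt_id t).smul_const u).const_add a
  have := hf.hasFDerivAt.comp_hasDerivAt t hline
  simp only [InnerProductSpace.toDual_apply_apply] at this
  exact this

theorem IsLocalMin.hasGradientAt_eq_zero {g a : E} (hmin : IsLocalMin f a)
    (hf : HasGradientAt f g a) : g = 0 := by
  simpa using hmin.hasFDerivAt_eq_zero hf.hasFDerivAt

theorem ConvexOn.add_inner_sub_le_of_hasGradientAt {g : E} (hconv : ConvexOn ℝ univ f)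
    {a : E} (hf : HasGradientAt f g a) (b : E) :
    f a + ⟪g, b - a⟫ ≤ f b := by
  have hline : ConvexOn ℝ univ (fun t : ℝ => f (a + t • (b - a))) := by
    simpa [Function.comp_def, AffineMap.lineMap_apply, add_comm] using
      hconv.comp_affineMap (AffineMap.lineMap a b)
  have hslope := hline.le_slope_of_hasDerivAt (mem_univ 0) (mem_univ 1) one_pos
    (HasGradientAt.hasDerivAt_comp_add_smul (by simpa using hf))
  simp only [slope, sub_zero, inv_one, one_smul, add_sub_cancel, zero_smul, add_zero,
    vsub_eq_sub, smul_eq_mul, one_mul] at hslope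
  linarith

variable {f' : E → E} {L : ℝ}

theorem le_add_inner_add_sq_norm_of_lipschitz_gradient (hf : ∀ x, HasGradientAt f (f' x) x)
    (hLip : ∀ x y, ‖f' x - f' y‖ ≤ L * ‖x - y‖) (a b : E) :
    f b ≤ f a + ⟪f' a, b - a⟫ + L / 2 * ‖b - a‖ ^ 2 := by
  set u := b - a
  set φ : ℝ → ℝ := fun t => f (a + t • u) - t * ⟪f' a, u⟫ - L / 2 * t ^ 2 * ‖u‖ ^ 2
  have hφ : ∀ t : ℝ, HasDerivAt φ (⟪f' (a + t • u) - f' a, u⟫ - L * t * ‖u‖ ^ 2) t := by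
    intro t
    have := (((hf (a + t • u)).hasDerivAt_comp_add_smul (a := a) (u := u)).sub
      ((hasDerivAt_id t).mul_const ⟪f' a, u⟫)).sub
      (((hasDerivAt_pow 2 t).const_mul (L / 2)).mul_const (‖u‖ ^ 2))
    refine (this : HasDerivAt φ _ t).congr_deriv ?_
    simp only [inner_sub_left]
    ring
  have hanti : AntitoneOn φ (Icc 0 1) := by
    refine antitoneOn_of_deriv_nonpos (convex_Icc 0 1)
      (fun t _ => (hφ t).continuousAt.continuousWithinAt)
      (fun t _ => (hφ t).differentiableAt.differentiableWithinAt) fun t ht => ?_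
    rw [interior_Icc] at ht
    have hstep : ‖f' (a + t • u) - f' a‖ ≤ L * (t * ‖u‖) := by
      simpa [norm_smul, abs_of_pos ht.1] using hLip (a + t • u) a
    rw [(hφ t).deriv, sub_nonpos]
    calc ⟪f' (a + t • u) - f' a, u⟫ ≤ ‖f' (a + t • u) - f' a‖ * ‖u‖ := real_inner_le_norm _ _
      _ ≤ L * (t * ‖u‖) * ‖u‖ := by gcongr
      _ = L * t * ‖u‖ ^ 2 := by ring
  have := hanti (left_mem_Icc.2 zero_le_one) (right_mem_Icc.2 zero_le_one) zero_le_one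
  simp only [one_smul, add_sub_cancel, one_mul, one_pow, mul_one, zero_smul, add_zero,
    zero_mul, sub_zero, ne_eq, OfNat.ofNat_ne_zero, not_false_eq_true, zero_pow, mul_zero,
    tsub_le_iff_right, φ, u] at this
  linarith

/-- Co-coercivity of the gradient, in the special case where one point is a minimizer. -/
theorem sq_norm_le_mul_inner_sub_of_isMinOn (hf : ∀ x, HasGradientAt f (f' x) x)
    (hconv : ConvexOn ℝ univ f) (hL : 0 < L) (hLip : ∀ x y, ‖f' x - f' y‖ ≤ L * ‖x - y‖)
    {v : E} (hv : IsMinOn f univ v) (a : E) :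
    ‖f' a‖ ^ 2 ≤ L * ⟪f' a, a - v⟫ := by
  have hv0 : f' v = 0 := (hv.isLocalMin Filter.univ_mem).hasGradientAt_eq_zero (hf v)
  have hdescent_a := le_add_inner_add_sq_norm_of_lipschitz_gradient hf hLip a (a - L⁻¹ • f' a)
  have hdescent_v := le_add_inner_add_sq_norm_of_lipschitz_gradient hf hLip v (v + L⁻¹ • f' a)
  have hconv_a := hconv.add_inner_sub_le_of_hasGradientAt (hf a) (v + L⁻¹ • f' a)
  have hmin : f v ≤ f (a - L⁻¹ • f' a) := hv (mem_univ _)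
  have hsplit : v + L⁻¹ • f' a - a = L⁻¹ • f' a - (a - v) := by abel
  rw [hsplit, inner_sub_right, real_inner_smul_right, real_inner_self_eq_norm_sq] at hconv_a
  simp only [hv0, sub_sub_cancel_left, add_sub_cancel_left, inner_zero_left, norm_neg,
    norm_smul, inner_neg_right, real_inner_smul_right, real_inner_self_eq_norm_sq,
    Real.norm_eq_abs, abs_inv, abs_of_pos hL] at hdescent_a hdescent_v
  have hL' : L / 2 * (L⁻¹ * ‖f' a‖) ^ 2 = L⁻¹ * ‖f' a‖ ^ 2 / 2 := by
    field_simp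
  rw [← inv_mul_le_iff₀ hL]
  linarith

end GradientInequalities

theorem le_of_gradient_step_bounds {s d G h L I : ℝ} (hs0 : 0 ≤ s) (hd : 0 ≤ d)
    (hh : 0 < h) (hL : 0 < L) (hhL : h * L ≤ 1 - s) (hdG : (1 - s) * d ≤ h * G)
    (hGI : G ^ 2 ≤ L * I) :
    (1 - s ^ 2) / (2 * h) * d ^ 2 + h / 2 * G ^ 2 ≤ I := by
  have hs1 : 0 < 1 - s := (mul_pos hh hL).trans_le hhL
  have hI : 0 ≤ I := nonneg_of_mul_nonneg_right ((sq_nonneg G).trans hGI) hL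
  have hd2 : (1 - s) ^ 2 * d ^ 2 ≤ h ^ 2 * G ^ 2 := by
    rw [← mul_pow, ← mul_pow]
    exact pow_le_pow_left₀ (by nlinarith) hdG 2
  have hG2 : h * G ^ 2 ≤ (1 - s) * I := by nlinarith
  rw [div_mul_eq_mul_div, div_add' _ _ _ (by positivity), div_le_iff₀ (by positivity)]
  nlinarith

theorem stmt1_general {n : ℕ} (f : EuclideanSpace ℝ (Fin n) → ℝ)
    (f' : EuclideanSpace ℝ (Fin n) → EuclideanSpace ℝ (Fin n))
    (hf : ∀ x, HasGradientAt f (f' x) x)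
    (hconv : ConvexOn ℝ Set.univ f)
    (L : ℝ) (hL : 0 < L)
    (hLip : ∀ x y, ‖f' x - f' y‖ ≤ L * ‖x - y‖)
    (S : Set (EuclideanSpace ℝ (Fin n)))
    (hS : S = {x | ∀ y, f x ≤ f y})
    (h τ : ℝ) (hτ : τ ∈ Set.Ioo (0:ℝ) 1)
    (hh : 0 < h) (hhle : h ≤ (1 - Real.sqrt τ) / L)
    (x : ℕ → EuclideanSpace ℝ (Fin n))
    (hiter : ∀ k, x (k+1) = x k - h • f' (x k))
    (hlin : ∀ k, (Metric.infDist (x (k+1)) S)^2 ≤ τ * (Metric.infDist (x k) S)^2) :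
    ∀ k, ∀ v ∈ S, dist (x k) v = Metric.infDist (x k) S →
      ((1-τ)/(2*h)) * (Metric.infDist (x k) S)^2 + (h/2) * ‖f' (x k)‖^2
        ≤ ⟪f' (x k), x k - v⟫ := by
  intro k v hv _
  have hmin : IsMinOn f univ v := fun y _ => by rw [hS] at hv; exact hv y
  have hcontract : infDist (x (k + 1)) S ≤ √τ * infDist (x k) S := by
    have hrhs : 0 ≤ √τ * infDist (x k) S := mul_nonneg (Real.sqrt_nonneg τ) infDist_nonneg
    rw [← pow_le_pow_iff_left₀ infDist_nonneg hrhs two_ne_zero, mul_pow, Real.sq_sqrt hτ.1.le]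
    exact hlin k
  have hstep : (1 - √τ) * infDist (x k) S ≤ h * ‖f' (x k)‖ := by
    have hdist : dist (x k) (x (k + 1)) = h * ‖f' (x k)‖ := by
      rw [hiter k, dist_eq_norm, sub_sub_cancel, norm_smul, Real.norm_of_nonneg hh.le]
    linarith [infDist_le_infDist_add_dist (s := S) (x := x k) (y := x (k + 1))]
  rw [← Real.sq_sqrt hτ.1.le]
  exact le_of_gradient_step_bounds (Real.sqrt_nonneg τ) infDist_nonneg hh hL
    ((le_div_iff₀ hL).1 hhle) hstep (sq_norm_le_mul_inner_sub_of_isMinOn hf hconv hL hLip hmin _)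

/-- Necessity of the correlated error bound for linear convergence of
gradient descent on `F^{1,1}_L` convex functions with step size `0 < h ≤ (1−√τ)/L`. -/
theorem stmt1 {n : ℕ} (f : EuclideanSpace ℝ (Fin n) → ℝ)
    (f' : EuclideanSpace ℝ (Fin n) → EuclideanSpace ℝ (Fin n))
    (hf : ∀ x, HasGradientAt f (f' x) x)
    (hconv : ConvexOn ℝ Set.univ f)
    (L : ℝ) (hL : 0 < L)
    (hLip : ∀ x y, ‖f' x - f' y‖ ≤ L * ‖x - y‖)
    (S : Set (EuclideanSpace ℝ (Fin n)))
    (hS : S = {x | ∀ y, f x ≤ f y}) (hSne : S.Nonempty)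
    (h τ : ℝ) (hτ : τ ∈ Set.Ioo (0:ℝ) 1)
    (hh : 0 < h) (hhle : h ≤ (1 - Real.sqrt τ) / L)
    (x : ℕ → EuclideanSpace ℝ (Fin n))
    (hiter : ∀ k, x (k+1) = x k - h • f' (x k))
    (hlin : ∀ k, (Metric.infDist (x (k+1)) S)^2 ≤ τ * (Metric.infDist (x k) S)^2) :
    ∀ k, ∀ v ∈ S, dist (x k) v = Metric.infDist (x k) S →
      ((1-τ)/(2*h)) * (Metric.infDist (x k) S)^2 + (h/2) * ‖f' (x k)‖^2
        ≤ ⟪f' (x k), x k - v⟫ :=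
  stmt1_general f f' hf hconv L hL hLip S hS h τ hτ hh hhle x hiter hlin
end

section
/- Under a (cor-obj-EB) condition with constant ω, the (res-EB) condition with constant κ implies the (res-obj-EB) condition with constant η = √(κω): i.e., if ⟨G(x), x − x_p⟩ ≥ ω·(φ(x) − min φ) for all x_p ∈ proj_{crit φ}(x) and ‖G(x)‖ ≥ κ·d(x, crit φ) for all x ∈ Ω ∩ dom φ, then ‖G(x)‖ ≥ √(κω)·√(φ(x) − min φ) for all x ∈ Ω ∩ dom φ. -/
open scoped RealInnerProductSpace

/-- Under the (cor-obj-EB) condition with constant `ω`, the (res-EB)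
condition with constant `κ` implies the (res-obj-EB) condition with `η = √(κω)`. -/
theorem stmt4 {n : ℕ} (φ : EuclideanSpace ℝ (Fin n) → ℝ)
    (D X Ω C : Set (EuclideanSpace ℝ (Fin n)))
    (hΩX : Ω ⊆ X)
    (hlsc : LowerSemicontinuous φ)
    (G : EuclideanSpace ℝ (Fin n) → EuclideanSpace ℝ (Fin n))
    (hres : {x ∈ X | G x = 0} = C)
    (hCne : C.Nonempty) (hCcl : IsClosed C)
    (m : ℝ) (hm : ∀ x, m ≤ φ x) (hach : ∃ x, φ x = m)
    (ω κ : ℝ) (hω : 0 < ω) (hκ : 0 < κ)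
    (hcorobj : ∀ x ∈ Ω ∩ D, ∀ xp ∈ C, dist x xp = Metric.infDist x C →
      ω * (φ x - m) ≤ ⟪G x, x - xp⟫)
    (hresEB : ∀ x ∈ Ω ∩ D, κ * Metric.infDist x C ≤ ‖G x‖) :
    ∀ x ∈ Ω ∩ D, Real.sqrt (κ * ω) * Real.sqrt (φ x - m) ≤ ‖G x‖ := by
  intro x hx
  obtain ⟨xp, hxpC, hxp⟩ := hCcl.exists_infDist_eq_dist hCne x
  have h1 := hcorobj x hx xp hxpC hxp.symm
  have h2 := hresEB x hx
  have hd : (0:ℝ) ≤ Metric.infDist x C := Metric.infDist_nonneg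
  have hphi : (0:ℝ) ≤ φ x - m := sub_nonneg.2 (hm x)
  have hcs : ⟪G x, x - xp⟫ ≤ ‖G x‖ * ‖x - xp‖ := real_inner_le_norm _ _
  have hnd : ‖x - xp‖ = Metric.infDist x C := by
    rw [← dist_eq_norm, ← hxp]
  have key : κ * ω * (φ x - m) ≤ ‖G x‖ ^ 2 := by
    have : κ * (ω * (φ x - m)) ≤ κ * (‖G x‖ * Metric.infDist x C) := by
      apply mul_le_mul_of_nonneg_left _ hκ.le
      calc ω * (φ x - m) ≤ ⟪G x, x - xp⟫ := h1
        _ ≤ ‖G x‖ * ‖x - xp‖ := hcs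
        _ = ‖G x‖ * Metric.infDist x C := by rw [hnd]
    calc κ * ω * (φ x - m) = κ * (ω * (φ x - m)) := by ring
      _ ≤ κ * (‖G x‖ * Metric.infDist x C) := this
      _ = (κ * Metric.infDist x C) * ‖G x‖ := by ring
      _ ≤ ‖G x‖ * ‖G x‖ := mul_le_mul_of_nonneg_right h2 (norm_nonneg _)
      _ = ‖G x‖ ^ 2 := (sq ‖G x‖).symm
  calc Real.sqrt (κ * ω) * Real.sqrt (φ x - m)
      = Real.sqrt (κ * ω * (φ x - m)) := (Real.sqrt_mul (by positivity) _).symm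
    _ ≤ Real.sqrt (‖G x‖ ^ 2) := Real.sqrt_le_sqrt key
    _ = ‖G x‖ := Real.sqrt_sq (norm_nonneg _)
end

section
/- Let φ = f + g with f convex differentiable with L-Lipschitz gradient and g proper lsc convex, and let t ∈ (0, 1/L]. Let x⁺ = prox_{tg}(x − t∇f(x)) and G_t(x) = (x − x⁺)/t. If ‖G_t(x)‖² ≥ ε·(φ(x) − φ(x⁺)) for some 0 < ε ≤ 2/t, then for the unique projection x_p of x onto Argmin φ one has ⟨G_t(x), x − x_p⟩ ≥ (tε/2)·(φ(x) − min φ), i.e., the (cor-obj-EB) condition with ω = tε/2 holds. -/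
open scoped RealInnerProductSpace
open Set Filter Topology

/-! With `G = G_t(x)`, the fundamental prox-grad inequality at `y = x_p` and the hypothesis on `‖G‖²` give
`⟪G, x - x_p⟫ ≥ φ(x⁺) - φ(x_p) + (t/2)‖G‖² ≥ φ(x⁺) - φ(x_p) + (tε/2)(φ(x) - φ(x⁺))`,
and the right side equals `(tε/2)(φ(x) - min φ) + (1 - tε/2)(φ(x⁺) - min φ)`, whose second term
is nonnegative because `tε ≤ 2`. The fundamental inequality is the sum of the descent lemma and
the gradient inequality for `f` with the variational inequality characterising the prox step. -/

theorem le_of_forall_le_add_mul {a b c : ℝ} (h : ∀ r : ℝ, 0 < r → r < 1 → a ≤ b + r * c) :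
    a ≤ b := by
  have hlim : Tendsto (fun r : ℝ => b + r * c) (𝓝[>] 0) (𝓝 b) := by
    simpa using (Continuous.tendsto (by fun_prop) 0 : Tendsto (fun r : ℝ => b + r * c) _ _)
      |>.mono_left nhdsWithin_le_nhds
  exact ge_of_tendsto hlim <| by
    filter_upwards [Ioo_mem_nhdsGT zero_lt_one] with r hr using h r hr.1 hr.2

section Prox

variable {E : Type*} [NormedAddCommGroup E] [InnerProductSpace ℝ E]

def IsProxPoint (g : E → ℝ) (t : ℝ) (u z : E) : Prop :=
  ∀ y, g z + (1 / (2 * t)) * ‖z - u‖ ^ 2 ≤ g y + (1 / (2 * t)) * ‖y - u‖ ^ 2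

theorem IsProxPoint.le_add_inner {g : E → ℝ} {t : ℝ} {u z : E} (hz : IsProxPoint g t u z)
    (hg : ConvexOn ℝ univ g) (y : E) :
    g z ≤ g y + t⁻¹ * ⟪z - u, y - z⟫ := by
  refine le_of_forall_le_add_mul (c := (1 / (2 * t)) * ‖y - z‖ ^ 2) fun r hr0 hr1 => ?_
  have hconv : g (z + r • (y - z)) ≤ (1 - r) * g z + r * g y := by
    have := hg.2 (mem_univ z) (mem_univ y) (sub_nonneg.2 hr1.le) hr0.le (by ring)
    rwa [show (1 - r) • z + r • y = z + r • (y - z) by module] at this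
  have hnorm : ‖z + r • (y - z) - u‖ ^ 2
      = ‖z - u‖ ^ 2 + 2 * r * ⟪z - u, y - z⟫ + r ^ 2 * ‖y - z‖ ^ 2 := by
    rw [show z + r • (y - z) - u = (z - u) + r • (y - z) by abel, norm_add_sq_real,
      real_inner_smul_right, norm_smul, Real.norm_eq_abs, mul_pow, sq_abs]
    ring
  have hmin := hz (z + r • (y - z))
  rw [hnorm] at hmin
  have hscaled : r * (g z - (g y + t⁻¹ * ⟪z - u, y - z⟫ + r * (1 / (2 * t) * ‖y - z‖ ^ 2)))
      ≤ 0 := by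
    linear_combination hmin + hconv
  exact sub_nonpos.1 (nonpos_of_mul_nonpos_right hscaled hr0)

end Prox

section Gradient

variable {E : Type*} [NormedAddCommGroup E] [InnerProductSpace ℝ E] [CompleteSpace E]
  {f g : E → ℝ} {f' : E → E}

theorem hasDerivAt_comp_lineMap_of_hasGradientAt (hf : ∀ p, HasGradientAt f (f' p) p)
    (x y : E) (s : ℝ) :
    HasDerivAt (fun s : ℝ => f (s • (y - x) + x)) ⟪f' (s • (y - x) + x), y - x⟫ s := by
  have hline : HasDerivAt (fun s : ℝ => s • (y - x) + x) (y - x) s := by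
    simpa using ((hasDerivAt_id s).smul_const (y - x)).add_const x
  simpa [InnerProductSpace.toDual_apply_apply, Function.comp_def] using
    (hf _).hasFDerivAt.comp_hasDerivAt s hline

theorem ConvexOn.add_inner_le_of_hasGradientAt (hconv : ConvexOn ℝ univ f)
    (hf : ∀ p, HasGradientAt f (f' p) p) (x y : E) :
    f x + ⟪f' x, y - x⟫ ≤ f y := by
  have hline : ConvexOn ℝ univ (fun s : ℝ => f (s • (y - x) + x)) := by
    simpa [Function.comp_def, AffineMap.lineMap_apply_module'] using
      hconv.comp_affineMap (AffineMap.lineMap x y)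
  have hslope := hline.le_slope_of_hasDerivAt (mem_univ 0) (mem_univ 1) one_pos
    (hasDerivAt_comp_lineMap_of_hasGradientAt hf x y 0)
  simp only [slope_def_field, zero_smul, zero_add, one_smul, sub_add_cancel, sub_zero,
    div_one] at hslope
  linarith

theorem descent_lemma {L : ℝ} (hf : ∀ p, HasGradientAt f (f' p) p)
    (hLip : ∀ p q, ‖f' p - f' q‖ ≤ L * ‖p - q‖) (x y : E) :
    f y ≤ f x + ⟪f' x, y - x⟫ + L / 2 * ‖y - x‖ ^ 2 := by
  set ψ : ℝ → ℝ := fun s =>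
    f (s • (y - x) + x) - s * ⟪f' x, y - x⟫ - L / 2 * s ^ 2 * ‖y - x‖ ^ 2
  have hψ : ∀ s, HasDerivAt ψ
      (⟪f' (s • (y - x) + x), y - x⟫ - ⟪f' x, y - x⟫ - L * s * ‖y - x‖ ^ 2) s := by
    intro s
    have hquad := ((hasDerivAt_pow 2 s).const_mul (L / 2)).mul_const (‖y - x‖ ^ 2)
    exact (((hasDerivAt_comp_lineMap_of_hasGradientAt hf x y s).sub
      ((hasDerivAt_id s).mul_const ⟪f' x, y - x⟫)).sub hquad).congr_deriv
      (by simp only [Nat.cast_ofNat, one_mul]; ring)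
  have hanti : AntitoneOn ψ (Icc 0 1) := by
    refine antitoneOn_of_hasDerivWithinAt_nonpos (convex_Icc 0 1)
      (fun s _ => (hψ s).continuousAt.continuousWithinAt)
      (fun s _ => (hψ s).hasDerivWithinAt) fun s hs => ?_
    rw [interior_Icc] at hs
    have hgrowth : ⟪f' (s • (y - x) + x) - f' x, y - x⟫ ≤ L * s * ‖y - x‖ ^ 2 :=
      calc ⟪f' (s • (y - x) + x) - f' x, y - x⟫
          ≤ ‖f' (s • (y - x) + x) - f' x‖ * ‖y - x‖ := real_inner_le_norm _ _
        _ ≤ L * ‖s • (y - x) + x - x‖ * ‖y - x‖ := by gcongr; exact hLip _ _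
        _ = L * s * ‖y - x‖ ^ 2 := by
          rw [add_sub_cancel_right, norm_smul, Real.norm_of_nonneg hs.1.le]; ring
    rw [inner_sub_left] at hgrowth
    linarith
  have h01 := hanti (left_mem_Icc.2 zero_le_one) (right_mem_Icc.2 zero_le_one) zero_le_one
  simp only [ψ, zero_smul, zero_add, one_smul, sub_add_cancel] at h01
  linarith

theorem fundamental_prox_grad_ineq {L t : ℝ} (hf : ∀ p, HasGradientAt f (f' p) p)
    (hfconv : ConvexOn ℝ univ f) (hLip : ∀ p q, ‖f' p - f' q‖ ≤ L * ‖p - q‖)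
    (hg : ConvexOn ℝ univ g) (ht : 0 < t) (hLt : L * t ≤ 1) {x xplus : E}
    (hprox : IsProxPoint g t (x - t • f' x) xplus) (y : E) :
    f xplus + g xplus
      ≤ f y + g y + ⟪t⁻¹ • (x - xplus), x - y⟫ - t / 2 * ‖t⁻¹ • (x - xplus)‖ ^ 2 := by
  set G := t⁻¹ • (x - xplus)
  have hxplus : xplus = x - t • G := by simp [G, smul_smul, ht.ne']
  clear_value G
  subst hxplus
  have hdesc := descent_lemma hf hLip x (x - t • G)
  have hgrad := hfconv.add_inner_le_of_hasGradientAt hf x y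
  have hvar := hprox.le_add_inner hg y
  rw [show x - t • G - x = -(t • G) by abel] at hdesc
  rw [show x - t • G - (x - t • f' x) = t • (f' x - G) by module,
    show y - (x - t • G) = (y - x) + t • G by abel] at hvar
  simp only [inner_neg_right, norm_neg, norm_smul, real_inner_smul_left, real_inner_smul_right,
    inner_add_right, inner_sub_left, Real.norm_of_nonneg ht.le, real_inner_self_eq_norm_sq]
    at hdesc hvar
  rw [← mul_add, inv_mul_cancel_left₀ ht.ne'] at hvar
  rw [show x - y = -(y - x) by abel, inner_neg_right]
  have hstep : L / 2 * (t * ‖G‖) ^ 2 ≤ t / 2 * ‖G‖ ^ 2 :=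
    calc L / 2 * (t * ‖G‖) ^ 2 = L * t * (t * ‖G‖ ^ 2) / 2 := by ring
      _ ≤ 1 * (t * ‖G‖ ^ 2) / 2 := by gcongr
      _ = t / 2 * ‖G‖ ^ 2 := by ring
  linarith

end Gradient

theorem stmt6_general {n : ℕ} (f g : EuclideanSpace ℝ (Fin n) → ℝ)
    (f' : EuclideanSpace ℝ (Fin n) → EuclideanSpace ℝ (Fin n))
    (hf : ∀ x, HasGradientAt f (f' x) x)
    (hfconv : ConvexOn ℝ Set.univ f)
    (L : ℝ) (hL : 0 < L)
    (hLip : ∀ x y, ‖f' x - f' y‖ ≤ L * ‖x - y‖)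
    (hgconv : ConvexOn ℝ Set.univ g)
    (t : ℝ) (ht : 0 < t) (htL : t ≤ 1/L)
    (m : ℝ) (hach : ∃ x, f x + g x = m)
    (x xplus : EuclideanSpace ℝ (Fin n))
    (hprox : ∀ y, g xplus + (1/(2*t)) * ‖xplus - (x - t • f' x)‖^2
      ≤ g y + (1/(2*t)) * ‖y - (x - t • f' x)‖^2)
    (ε : ℝ) (hε : 0 < ε) (hεt : ε ≤ 2/t)
    (hcond : ε * ((f x + g x) - (f xplus + g xplus)) ≤ ‖t⁻¹ • (x - xplus)‖^2)
    (xp : EuclideanSpace ℝ (Fin n))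
    (hxp : xp ∈ {z | ∀ y, f z + g z ≤ f y + g y}) :
    (t * ε / 2) * ((f x + g x) - m) ≤ ⟪t⁻¹ • (x - xplus), x - xp⟫ := by
  have hLt : L * t ≤ 1 := by rwa [le_div_iff₀ hL, mul_comm] at htL
  have hxp_le : f xp + g xp ≤ m := hach.elim fun z hz => hz ▸ hxp z
  have hkey := fundamental_prox_grad_ineq hf hfconv hLip hgconv ht hLt hprox xp
  have hstep : 0 ≤ (1 - t * ε / 2) * ((f xplus + g xplus) - (f xp + g xp)) := by
    refine mul_nonneg ?_ (sub_nonneg.2 (hxp xplus))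
    rw [le_div_iff₀ ht] at hεt
    linarith
  have hgap : t * ε / 2 * (f xp + g xp - m) ≤ 0 :=
    mul_nonpos_of_nonneg_of_nonpos (by positivity) (sub_nonpos.2 hxp_le)
  linarith [mul_le_mul_of_nonneg_left hcond (by positivity : (0 : ℝ) ≤ t / 2)]

/-- For `φ = f + g` with `f ∈ F^{1,1}_L`, `g` convex lsc, `t ∈ (0,1/L]`,
`x⁺ = prox_{tg}(x − t∇f(x))` and `G_t(x) = (x − x⁺)/t`. If
`‖G_t(x)‖² ≥ ε·(φ(x) − φ(x⁺))` with `0 < ε ≤ 2/t`, then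
`⟨G_t(x), x − x_p⟩ ≥ (tε/2)·(φ(x) − min φ)` for the projection `x_p` of `x` onto `Argmin φ`. -/
theorem stmt6 {n : ℕ} (f g : EuclideanSpace ℝ (Fin n) → ℝ)
    (f' : EuclideanSpace ℝ (Fin n) → EuclideanSpace ℝ (Fin n))
    (hf : ∀ x, HasGradientAt f (f' x) x)
    (hfconv : ConvexOn ℝ Set.univ f)
    (L : ℝ) (hL : 0 < L)
    (hLip : ∀ x y, ‖f' x - f' y‖ ≤ L * ‖x - y‖)
    (hgconv : ConvexOn ℝ Set.univ g) (hglsc : LowerSemicontinuous g)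
    (t : ℝ) (ht : 0 < t) (htL : t ≤ 1/L)
    (m : ℝ) (hm : ∀ x, m ≤ f x + g x) (hach : ∃ x, f x + g x = m)
    (x xplus : EuclideanSpace ℝ (Fin n))
    (hprox : ∀ y, g xplus + (1/(2*t)) * ‖xplus - (x - t • f' x)‖^2
      ≤ g y + (1/(2*t)) * ‖y - (x - t • f' x)‖^2)
    (ε : ℝ) (hε : 0 < ε) (hεt : ε ≤ 2/t)
    (hcond : ε * ((f x + g x) - (f xplus + g xplus)) ≤ ‖t⁻¹ • (x - xplus)‖^2)
    (xp : EuclideanSpace ℝ (Fin n))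
    (hxp : xp ∈ {z | ∀ y, f z + g z ≤ f y + g y})
    (hxpproj : dist x xp = Metric.infDist x {z | ∀ y, f z + g z ≤ f y + g y}) :
    (t * ε / 2) * ((f x + g x) - m) ≤ ⟪t⁻¹ • (x - xplus), x - xp⟫ :=
  stmt6_general f g f' hf hfconv L hL hLip hgconv t ht htL m hach x xplus hprox ε hε hεt hcond xp
    hxp
end

section
/- Abstract gradient method, sufficiency: suppose φ satisfies on Ω the (cor-res-EB) condition inf_{x_p}⟨G(x), x − x_p⟩ ≥ β‖G(x)‖² and the (cor-EB) condition inf_{x_p}⟨G(x), x − x_p⟩ ≥ ν·d(x, crit φ)² with ν < 1/β. If x_{k+1} = x_k − h·G(x_k) stays in Ω, θ ∈ (0,1), (1−τ)/(2θν) ≤ h ≤ 2(1−θ)β, and τ ≥ 1 − 4θ(1−θ)βν, then d(x_{k+1}, crit φ)² ≤ τ·d(x_k, crit φ)² for all k. -/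
open scoped RealInnerProductSpace

/-- Abstract gradient-type method, sufficiency. Under the (cor-res-EB)
condition with constant `β` and the (cor-EB) condition with constant `ν < 1/β` on `Ω`,
the iteration `x_{k+1} = x_k − h·G(x_k)` with
`(1−τ)/(2θν) ≤ h ≤ 2(1−θ)β` and `τ ≥ 1 − 4θ(1−θ)βν` converges linearly:
`d(x_{k+1}, crit φ)² ≤ τ·d(x_k, crit φ)²`. -/
theorem stmt7 {n : ℕ} (φ : EuclideanSpace ℝ (Fin n) → ℝ)
    (D X Ω C : Set (EuclideanSpace ℝ (Fin n)))
    (hΩX : Ω ⊆ X)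
    (hlsc : LowerSemicontinuous φ)
    (G : EuclideanSpace ℝ (Fin n) → EuclideanSpace ℝ (Fin n))
    (hres : {x ∈ X | G x = 0} = C)
    (hCne : C.Nonempty) (hCcl : IsClosed C)
    (m : ℝ) (hm : ∀ x, m ≤ φ x) (hach : ∃ x, φ x = m)
    (β ν : ℝ) (hβ : 0 < β) (hν : 0 < ν) (hνβ : ν < 1/β)
    (hcorres : ∀ x ∈ Ω ∩ D, ∀ xp ∈ C, dist x xp = Metric.infDist x C →
      β * ‖G x‖^2 ≤ ⟪G x, x - xp⟫)
    (hcor : ∀ x ∈ Ω ∩ D, ∀ xp ∈ C, dist x xp = Metric.infDist x C →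
      ν * (Metric.infDist x C)^2 ≤ ⟪G x, x - xp⟫)
    (h τ θ : ℝ) (hh : 0 < h) (hτ : τ ∈ Set.Ioo (0:ℝ) 1) (hθ : θ ∈ Set.Ioo (0:ℝ) 1)
    (hstep1 : (1-τ)/(2*θ*ν) ≤ h) (hstep2 : h ≤ 2*(1-θ)*β)
    (hτge : 1 - 4*θ*(1-θ)*β*ν ≤ τ)
    (x : ℕ → EuclideanSpace ℝ (Fin n))
    (hx0 : x 0 ∈ Ω)
    (hiter : ∀ k, x (k+1) = x k - h • G (x k))
    (hin : ∀ k, x k ∈ Ω ∩ D) :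
    ∀ k, (Metric.infDist (x (k+1)) C)^2 ≤ τ * (Metric.infDist (x k) C)^2 := by
  intro k
  obtain ⟨hθ0, hθ1⟩ := hθ
  obtain ⟨hτ0, hτ1⟩ := hτ
  obtain ⟨xp, hxpC, hxp⟩ := hCcl.exists_infDist_eq_dist hCne (x k)
  have hdist : dist (x k) xp = Metric.infDist (x k) C := hxp.symm
  set g := G (x k) with hg
  set a := x k - xp with ha
  have hI := hcorres (x k) (hin k) xp hxpC hdist
  have hI2 := hcor (x k) (hin k) xp hxpC hdist
  have hInn : (0:ℝ) ≤ ⟪g, a⟫ := le_trans (by positivity) hI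
  have hd0 : 0 ≤ Metric.infDist (x k) C := Metric.infDist_nonneg
  have hnorm : ‖a‖ = Metric.infDist (x k) C := by
    rw [← hdist, dist_eq_norm]
  have hstep : x (k+1) - xp = a - h • g := by
    rw [hiter k, ha]; abel
  have h1 : Metric.infDist (x (k+1)) C ≤ ‖a - h • g‖ := by
    calc Metric.infDist (x (k+1)) C ≤ dist (x (k+1)) xp := Metric.infDist_le_dist_of_mem hxpC
    _ = ‖a - h • g‖ := by rw [dist_eq_norm, hstep]
  have hexp : ‖a - h • g‖^2 = ‖a‖^2 - 2*h*⟪g, a⟫ + h^2*‖g‖^2 := by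
    rw [@norm_sub_sq_real]
    rw [real_inner_smul_right, norm_smul, real_inner_comm]
    simp [mul_pow, abs_of_pos hh]
    ring
  have hN : ‖g‖^2 ≤ ⟪g, a⟫ / β := by
    rw [le_div_iff₀ hβ] at *
    linarith [hI]
  have key : ‖a - h • g‖^2 ≤ ‖a‖^2 - 2*θ*h*⟪g, a⟫ := by
    rw [hexp]
    have h2 : h^2*‖g‖^2 ≤ h^2 * (⟪g, a⟫ / β) := by
      apply mul_le_mul_of_nonneg_left hN (by positivity)
    have h3 : h^2 * (⟪g, a⟫ / β) = h * (h/β) * ⟪g, a⟫ := by ring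
    have h4 : h/β ≤ 2*(1-θ) := by
      rw [div_le_iff₀ hβ]; linarith
    nlinarith [mul_le_mul_of_nonneg_left h4 hh.le]
  have key2 : ‖a - h • g‖^2 ≤ (1 - 2*θ*ν*h) * (Metric.infDist (x k) C)^2 := by
    have h5 : 2*θ*h*(ν * (Metric.infDist (x k) C)^2) ≤ 2*θ*h*⟪g, a⟫ := by
      apply mul_le_mul_of_nonneg_left hI2 (by positivity)
    calc ‖a - h • g‖^2 ≤ ‖a‖^2 - 2*θ*h*⟪g, a⟫ := key
    _ ≤ ‖a‖^2 - 2*θ*h*(ν * (Metric.infDist (x k) C)^2) := by linarith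
    _ = (1 - 2*θ*ν*h) * (Metric.infDist (x k) C)^2 := by rw [hnorm]; ring
  have hτh : 1 - 2*θ*ν*h ≤ τ := by
    have := hstep1
    rw [div_le_iff₀ (by positivity)] at this
    linarith
  have hlhs : (Metric.infDist (x (k+1)) C)^2 ≤ ‖a - h • g‖^2 := by
    apply pow_le_pow_left₀ Metric.infDist_nonneg h1
  calc (Metric.infDist (x (k+1)) C)^2 ≤ ‖a - h • g‖^2 := hlhs
  _ ≤ (1 - 2*θ*ν*h) * (Metric.infDist (x k) C)^2 := key2
  _ ≤ τ * (Metric.infDist (x k) C)^2 := by nlinarith [sq_nonneg (Metric.infDist (x k) C)]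
end

section
/- FBS objective linear rate: let φ = f + g with f ∈ F^{1,1}_L and g ∈ Γ₀(ℝⁿ) achieve its minimum, and suppose on Ω = {φ ≤ min φ + ε} the condition ⟨R(x), x − x_p⟩ ≥ ν·d(x, Argmin φ)² holds for the projection x_p of x onto Argmin φ, where R(x) = L(x − prox_{(1/L)g}(x − (1/L)∇f(x))) and ν < 2L. Then the forward–backward iterates x_{k+1} = x_k − (1/L)R(x_k) started in Ω satisfy φ(x_{k+1}) − min φ ≤ (1 − ν/(2L))·(φ(x_k) − min φ) for all k. -/
/-!
For the prox-step `p` of `y` and `R y = L • (y - p)`, the gradient inequality of the convex `f`,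
the descent lemma for its `L`-Lipschitz gradient and the variational inequality of the proximal
point add up to `φ p + ‖R y‖² / (2L) ≤ φ x + ⟪R y, y - x⟫` for every `x`.
At `x = y` this is a sufficient decrease, so the iterates never leave `Ω`. At the projection `x_p`
of `y` onto `Argmin φ` (closed, since a finite convex function on `ℝⁿ` is continuous), the error
bound and Cauchy–Schwarz give `ν ⟪R y, y - x_p⟫ ≤ ‖R y‖²`, and the two instances combine to the
rate `1 - ν / (2L)`.
-/

open scoped RealInnerProductSpace Topology
open Set Filter AffineMap

theorem mul_le_sq_of_mul_sq_le_of_le_mul {ν d I r : ℝ} (hν : 0 < ν)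
    (h₁ : ν * d ^ 2 ≤ I) (h₂ : I ≤ r * d) : ν * I ≤ r ^ 2 := by
  nlinarith [sq_nonneg (r - ν * d), mul_le_mul_of_nonneg_left h₁ hν.le,
    mul_le_mul_of_nonneg_left h₂ hν.le]

theorem isClosed_setOf_forall_le {X α : Type*} [TopologicalSpace X] [TopologicalSpace α]
    [Preorder α] [OrderClosedTopology α] {φ : X → α} (hφ : Continuous φ) :
    IsClosed {z | ∀ y, φ z ≤ φ y} := by
  simp only [ofPred_forall]
  exact isClosed_iInter fun y => isClosed_le hφ continuous_const

section ForwardBackward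

variable {E : Type*} [NormedAddCommGroup E] [InnerProductSpace ℝ E] {g : E → ℝ}

theorem ConvexOn.add_mul_inner_le_of_isMinOn (hg : ConvexOn ℝ univ g) {c : ℝ} {u p : E}
    (hp : IsMinOn (fun y => g y + c / 2 * ‖y - u‖ ^ 2) univ p) (z : E) :
    g p + c * ⟪u - p, z - p⟫ ≤ g z := by
  set C := g z - g p - c * ⟪u - p, z - p⟫
  set B := c / 2 * ‖z - p‖ ^ 2
  -- compare `p` with `(1 - t) • p + t • z`, divide by `t` and let `t → 0⁺`
  have hpos : ∀ t ∈ Ioc (0 : ℝ) 1, 0 ≤ C + t * B := by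
    rintro t ⟨ht0, ht1⟩
    have hconv := hg.2 (mem_univ p) (mem_univ z) (sub_nonneg.2 ht1) ht0.le (by ring)
    have hmin := isMinOn_univ_iff.1 hp ((1 - t) • p + t • z)
    have hexp : (1 - t) • p + t • z - u = (p - u) + t • (z - p) := by module
    simp only [hexp, norm_add_sq_real, inner_smul_right, norm_smul, Real.norm_of_nonneg ht0.le,
      smul_eq_mul] at hmin hconv
    rw [← neg_sub u p, inner_neg_left, norm_neg] at hmin
    refine nonneg_of_mul_nonneg_right ?_ ht0
    linear_combination hmin + hconv
  have hlim : Tendsto (fun t => C + t * B) (𝓝[>] 0) (𝓝 C) :=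
    ((by fun_prop : Continuous fun t : ℝ => C + t * B).tendsto' 0 C (by simp)).mono_left
      nhdsWithin_le_nhds
  have := ge_of_tendsto hlim (eventually_of_mem (Ioc_mem_nhdsGT one_pos) hpos)
  linarith

variable [CompleteSpace E] {f : E → ℝ} {f' : E → E} {L : ℝ}

theorem hasDerivAt_comp_lineMap (hf : ∀ z, HasGradientAt f (f' z) z) (a b : E) (t : ℝ) :
    HasDerivAt (fun s => f (lineMap a b s)) ⟪f' (lineMap a b t), b - a⟫ t :=
  (hf _).hasFDerivAt.comp_hasDerivAt t hasDerivAt_lineMap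

theorem ConvexOn.add_inner_gradient_le (hfc : ConvexOn ℝ univ f)
    (hf : ∀ z, HasGradientAt f (f' z) z) (x y : E) : f y + ⟪f' y, x - y⟫ ≤ f x := by
  have hψ : ConvexOn ℝ univ (fun s => f (lineMap y x s)) := hfc.comp_affineMap (lineMap y x)
  have := hψ.le_slope_of_hasDerivAt (mem_univ 0) (mem_univ 1) one_pos
    (hasDerivAt_comp_lineMap hf y x 0)
  simp only [lineMap_apply_zero, slope_def_field, lineMap_apply_one, sub_zero, div_one] at this
  linarith

theorem le_add_inner_gradient_add_sq_of_lipschitz (hf : ∀ z, HasGradientAt f (f' z) z)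
    (hLip : ∀ x y, ‖f' x - f' y‖ ≤ L * ‖x - y‖) (z w : E) :
    f z ≤ f w + ⟪f' w, z - w⟫ + L / 2 * ‖z - w‖ ^ 2 := by
  set ψ : ℝ → ℝ := fun t => f (lineMap w z t) - t * ⟪f' w, z - w⟫ - L / 2 * t ^ 2 * ‖z - w‖ ^ 2
  have hψ : ∀ t, HasDerivAt ψ
      (⟪f' (lineMap w z t), z - w⟫ - ⟪f' w, z - w⟫ - L * t * ‖z - w‖ ^ 2) t := fun t => by
    refine (((hasDerivAt_comp_lineMap hf w z t).sub
      ((hasDerivAt_id t).mul_const ⟪f' w, z - w⟫)).sub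
      (((hasDerivAt_pow 2 t).const_mul (L / 2)).mul_const (‖z - w‖ ^ 2))).congr_deriv ?_
    push_cast; ring
  obtain ⟨c, hc, hc'⟩ := exists_hasDerivAt_eq_slope ψ _ one_pos
    (fun t _ => (hψ t).continuousAt.continuousWithinAt) (fun t _ => hψ t)
  have hderiv_nonpos :
      ⟪f' (lineMap w z c), z - w⟫ - ⟪f' w, z - w⟫ - L * c * ‖z - w‖ ^ 2 ≤ 0 := by
    rw [← inner_sub_left]
    have h1 := real_inner_le_norm (f' (lineMap w z c) - f' w) (z - w)
    have h2 := hLip (lineMap w z c) w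
    rw [← vsub_eq_sub (lineMap w z c) w, lineMap_vsub_left, vsub_eq_sub, norm_smul,
      Real.norm_of_nonneg hc.1.le] at h2
    nlinarith [norm_nonneg (z - w)]
  have hψ10 : ψ 1 ≤ ψ 0 := by
    have := hc' ▸ hderiv_nonpos
    simp only [sub_zero, div_one, tsub_le_iff_right, zero_add] at this
    linarith
  simp only [ψ, lineMap_apply_zero, lineMap_apply_one] at hψ10
  linarith

theorem forwardBackward_key (hf : ∀ z, HasGradientAt f (f' z) z) (hfc : ConvexOn ℝ univ f)
    (hLip : ∀ x y, ‖f' x - f' y‖ ≤ L * ‖x - y‖) (hg : ConvexOn ℝ univ g) (hL : L ≠ 0) {y p : E}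
    (hp : IsMinOn (fun z => g z + L / 2 * ‖z - (y - (1 / L) • f' y)‖ ^ 2) univ p) (x : E) :
    f p + g p + 1 / (2 * L) * ‖L • (y - p)‖ ^ 2 ≤ f x + g x + ⟪L • (y - p), y - x⟫ := by
  obtain ⟨v, rfl⟩ : ∃ v, p = y - v := ⟨y - p, (sub_sub_cancel y p).symm⟩
  have hconv := hfc.add_inner_gradient_le hf x y
  have hdesc := le_add_inner_gradient_add_sq_of_lipschitz hf hLip (y - v) y
  have hprox := hg.add_mul_inner_le_of_isMinOn hp x
  have hu : y - (1 / L) • f' y - (y - v) = v - (1 / L) • f' y := by abel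
  have hx : x - (y - v) = (x - y) + v := by abel
  rw [hu, hx] at hprox
  simp only [sub_sub_cancel_left, sub_sub_cancel, norm_neg, inner_neg_right, norm_smul,
    real_inner_smul_left, inner_sub_left, inner_add_right, real_inner_self_eq_norm_sq,
    Real.norm_eq_abs, mul_pow, sq_abs] at hdesc hprox ⊢
  have hsq : 1 / (2 * L) * (L ^ 2 * ‖v‖ ^ 2) = L / 2 * ‖v‖ ^ 2 := by field_simp
  rw [mul_add, mul_sub, mul_sub, ← mul_assoc, ← mul_assoc, mul_one_div_cancel hL, one_mul,
    one_mul] at hprox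
  rw [hsq, ← neg_sub x y, inner_neg_right]
  linarith

theorem forwardBackward_sufficient_decrease (hf : ∀ z, HasGradientAt f (f' z) z)
    (hfc : ConvexOn ℝ univ f) (hLip : ∀ x y, ‖f' x - f' y‖ ≤ L * ‖x - y‖)
    (hg : ConvexOn ℝ univ g) (hL : L ≠ 0) {y p : E}
    (hp : IsMinOn (fun z => g z + L / 2 * ‖z - (y - (1 / L) • f' y)‖ ^ 2) univ p) :
    f p + g p + 1 / (2 * L) * ‖L • (y - p)‖ ^ 2 ≤ f y + g y := by
  simpa using forwardBackward_key hf hfc hLip hg hL hp y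

theorem forwardBackward_linear_decrease (hf : ∀ z, HasGradientAt f (f' z) z)
    (hfc : ConvexOn ℝ univ f) (hLip : ∀ x y, ‖f' x - f' y‖ ≤ L * ‖x - y‖)
    (hg : ConvexOn ℝ univ g) (hL : 0 < L) {ν : ℝ} (hν : 0 < ν) (hν2L : ν ≤ 2 * L) {y p x : E}
    (hp : IsMinOn (fun z => g z + L / 2 * ‖z - (y - (1 / L) • f' y)‖ ^ 2) univ p)
    (heb : ν * ‖y - x‖ ^ 2 ≤ ⟪L • (y - p), y - x⟫) :
    f p + g p - (f x + g x) ≤ (1 - ν / (2 * L)) * (f y + g y - (f x + g x)) := by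
  set r := L • (y - p)
  have hdec := forwardBackward_sufficient_decrease hf hfc hLip hg hL.ne' hp
  have hkey := forwardBackward_key hf hfc hLip hg hL.ne' hp x
  have hgap : ν * ⟪r, y - x⟫ ≤ ‖r‖ ^ 2 :=
    mul_le_sq_of_mul_sq_le_of_le_mul hν heb (real_inner_le_norm r (y - x))
  have hsq : ‖r‖ ^ 2 = 2 * L * (1 / (2 * L) * ‖r‖ ^ 2) := by field_simp
  rw [one_sub_div (by positivity), div_mul_eq_mul_div, le_div_iff₀ (by positivity)]
  nlinarith [mul_le_mul_of_nonneg_left hdec (by linarith : 0 ≤ 2 * L - ν),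
    mul_le_mul_of_nonneg_left hkey hν.le]

end ForwardBackward

theorem stmt13_general {n : ℕ} (f g : EuclideanSpace ℝ (Fin n) → ℝ)
    (f' : EuclideanSpace ℝ (Fin n) → EuclideanSpace ℝ (Fin n))
    (hf : ∀ x, HasGradientAt f (f' x) x)
    (hfconv : ConvexOn ℝ Set.univ f)
    (L : ℝ) (hL : 0 < L)
    (hLip : ∀ x y, ‖f' x - f' y‖ ≤ L * ‖x - y‖)
    (hgconv : ConvexOn ℝ Set.univ g)
    (m : ℝ) (hm : ∀ x, m ≤ f x + g x) (hach : ∃ x, f x + g x = m)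
    (T : EuclideanSpace ℝ (Fin n) → EuclideanSpace ℝ (Fin n))
    (hT : ∀ x y, g (T x) + (L/2) * ‖T x - (x - (1/L) • f' x)‖^2
      ≤ g y + (L/2) * ‖y - (x - (1/L) • f' x)‖^2)
    (R : EuclideanSpace ℝ (Fin n) → EuclideanSpace ℝ (Fin n))
    (hR : ∀ x, R x = L • (x - T x))
    (ε : ℝ)
    (ν : ℝ) (hν : 0 < ν) (hν2L : ν < 2*L)
    (hcor : ∀ x ∈ {z | f z + g z ≤ m + ε},
      ∀ xp ∈ {z | ∀ y, f z + g z ≤ f y + g y},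
      dist x xp = Metric.infDist x {z | ∀ y, f z + g z ≤ f y + g y} →
      ν * (Metric.infDist x {z | ∀ y, f z + g z ≤ f y + g y})^2 ≤ ⟪R x, x - xp⟫)
    (x : ℕ → EuclideanSpace ℝ (Fin n))
    (hx0 : x 0 ∈ {z | f z + g z ≤ m + ε})
    (hiter : ∀ k, x (k+1) = x k - (1/L) • R (x k)) :
    ∀ k, (f (x (k+1)) + g (x (k+1))) - m ≤ (1 - ν/(2*L)) * ((f (x k) + g (x k)) - m) := by
  have hprox : ∀ y, IsMinOn (fun z => g z + L / 2 * ‖z - (y - (1 / L) • f' y)‖ ^ 2) univ (T y) :=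
    fun y => isMinOn_univ_iff.2 (hT y)
  have hstep : ∀ k, x (k + 1) = T (x k) := fun k => by
    rw [hiter, hR, smul_smul, one_div, inv_mul_cancel₀ hL.ne', one_smul, sub_sub_cancel]
  have hΩ : ∀ k, f (x k) + g (x k) ≤ m + ε := by
    intro k
    induction k with
    | zero => exact hx0
    | succ k ih =>
      have := forwardBackward_sufficient_decrease hf hfconv hLip hgconv hL.ne' (hprox (x k))
      rw [hstep]
      exact (le_add_of_nonneg_right (by positivity)).trans (this.trans ih)
  set S := {z | ∀ y, f z + g z ≤ f y + g y}
  have hS : IsClosed S := isClosed_setOf_forall_le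
    (continuousOn_univ.1 ((hfconv.add hgconv).continuousOn isOpen_univ))
  obtain ⟨xs, hxs⟩ := hach
  have hxsS : xs ∈ S := fun y => hxs ▸ hm y
  intro k
  obtain ⟨xp, hxpS, hdist⟩ := hS.exists_infDist_eq_dist ⟨xs, hxsS⟩ (x k)
  have hxp : f xp + g xp = m := le_antisymm (hxs ▸ hxpS xs) (hm xp)
  have heb := hcor (x k) (hΩ k) xp hxpS hdist.symm
  rw [hdist, dist_eq_norm, hR] at heb
  have := forwardBackward_linear_decrease hf hfconv hLip hgconv hL hν hν2L.le (hprox (x k)) heb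
  rwa [hxp, ← hstep] at this

/-- FBS objective linear rate. For `φ = f + g` with `f ∈ F^{1,1}_L`,
`g` convex lsc, the gradient mapping `R(x) = L(x − prox_{(1/L)g}(x − (1/L)∇f(x)))`,
and the (cor-EB) condition `⟨R(x), x − x_p⟩ ≥ ν·d(x, Argmin φ)²` on the sublevel set
`Ω = {φ ≤ min φ + ε}` with `ν < 2L`, the forward–backward iterates
`x_{k+1} = x_k − (1/L)R(x_k)` started in `Ω` satisfy
`φ(x_{k+1}) − min φ ≤ (1 − ν/(2L))·(φ(x_k) − min φ)`. -/
theorem stmt13 {n : ℕ} (f g : EuclideanSpace ℝ (Fin n) → ℝ)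
    (f' : EuclideanSpace ℝ (Fin n) → EuclideanSpace ℝ (Fin n))
    (hf : ∀ x, HasGradientAt f (f' x) x)
    (hfconv : ConvexOn ℝ Set.univ f)
    (L : ℝ) (hL : 0 < L)
    (hLip : ∀ x y, ‖f' x - f' y‖ ≤ L * ‖x - y‖)
    (hgconv : ConvexOn ℝ Set.univ g) (hglsc : LowerSemicontinuous g)
    (m : ℝ) (hm : ∀ x, m ≤ f x + g x) (hach : ∃ x, f x + g x = m)
    (T : EuclideanSpace ℝ (Fin n) → EuclideanSpace ℝ (Fin n))
    (hT : ∀ x y, g (T x) + (L/2) * ‖T x - (x - (1/L) • f' x)‖^2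
      ≤ g y + (L/2) * ‖y - (x - (1/L) • f' x)‖^2)
    (R : EuclideanSpace ℝ (Fin n) → EuclideanSpace ℝ (Fin n))
    (hR : ∀ x, R x = L • (x - T x))
    (ε : ℝ) (hε : 0 < ε)
    (ν : ℝ) (hν : 0 < ν) (hν2L : ν < 2*L)
    (hcor : ∀ x ∈ {z | f z + g z ≤ m + ε},
      ∀ xp ∈ {z | ∀ y, f z + g z ≤ f y + g y},
      dist x xp = Metric.infDist x {z | ∀ y, f z + g z ≤ f y + g y} →
      ν * (Metric.infDist x {z | ∀ y, f z + g z ≤ f y + g y})^2 ≤ ⟪R x, x - xp⟫)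
    (x : ℕ → EuclideanSpace ℝ (Fin n))
    (hx0 : x 0 ∈ {z | f z + g z ≤ m + ε})
    (hiter : ∀ k, x (k+1) = x k - (1/L) • R (x k)) :
    ∀ k, (f (x (k+1)) + g (x (k+1))) - m ≤ (1 - ν/(2*L)) * ((f (x k) + g (x k)) - m) :=
  stmt13_general f g f' hf hfconv L hL hLip hgconv m hm hach T hT R hR ε ν hν hν2L hcor x hx0 hiter
end

section
/- PALM sufficient decrease: under the block structure φ(x) = f(x₁,…,x_p) + Σⱼ gⱼ(xⱼ) with each partial function xⱼ ↦ f(…,xⱼ,…) having Lⱼ-Lipschitz gradient and each gⱼ proper lsc convex, the PALM iterates satisfy φ(x^{(t)}) − φ(x^{(t+1)}) ≥ (L_min/2)·‖x^{(t)} − x^{(t+1)}‖², where L_min = minⱼ Lⱼ. -/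
/-!
Updating block `j` from `xⱼ` to `xⱼ⁺` lowers `φ` by at least `(Lⱼ/2)‖xⱼ⁺ - xⱼ‖²`. Indeed, the
descent lemma for the `Lⱼ`-Lipschitz partial gradient gives
`f(new) ≤ f(old) + ⟪∇ⱼf, xⱼ⁺ - xⱼ⟫ + (Lⱼ/2)‖xⱼ⁺ - xⱼ‖²`, while `xⱼ⁺` minimises the `Lⱼ`-strongly
convex model `ξ ↦ ⟪ξ - xⱼ, ∇ⱼf⟫ + (Lⱼ/2)‖ξ - xⱼ‖² + gⱼ ξ`, so comparing with `ξ = xⱼ` gains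
`Lⱼ‖xⱼ⁺ - xⱼ‖²` (quadratic growth of a strongly convex function away from its minimiser).
Summing over one sweep telescopes along the intermediate points, and
`Σⱼ (Lⱼ/2)‖xⱼ - xⱼ⁺‖² ≥ (L_min/2)‖x - x⁺‖²`.
-/

open scoped RealInnerProductSpace
open Set Function

section InnerProductSpace

variable {E : Type*} [NormedAddCommGroup E] [InnerProductSpace ℝ E]

theorem le_add_inner_add_sq_of_lipschitz_gradient [CompleteSpace E] {F : E → ℝ} {G : E → E}
    {L : ℝ} (hG : ∀ x, HasGradientAt F (G x) x) (hLip : ∀ a b, ‖G a - G b‖ ≤ L * ‖a - b‖)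
    (x y : E) : F y ≤ F x + ⟪G x, y - x⟫ + L / 2 * ‖y - x‖ ^ 2 := by
  set Δ := y - x
  let q : ℝ → ℝ := fun s => F (x + s • Δ) - s * ⟪G x, Δ⟫ - s ^ 2 * (L / 2 * ‖Δ‖ ^ 2)
  have hq : ∀ s, HasDerivAt q (⟪G (x + s • Δ) - G x, Δ⟫ - s * (L * ‖Δ‖ ^ 2)) s := by
    intro s
    have hline : HasDerivAt (fun s : ℝ => x + s • Δ) Δ s := by
      simpa using ((hasDerivAt_id s).smul_const Δ).const_add x
    have hF : HasDerivAt (fun s : ℝ => F (x + s • Δ)) ⟪G (x + s • Δ), Δ⟫ s := by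
      have := (hG _).hasFDerivAt.comp_hasDerivAt s hline
      simp only [InnerProductSpace.toDual_apply_apply] at this
      exact this
    refine ((hF.sub ((hasDerivAt_id s).mul_const ⟪G x, Δ⟫)).sub
      ((hasDerivAt_pow 2 s).mul_const (L / 2 * ‖Δ‖ ^ 2))).congr_deriv ?_
    rw [inner_sub_left]
    ring
  -- the Lipschitz bound makes `q' ≤ 0` on `[0, 1]`, and `q 1 ≤ q 0` is the claim
  have hanti : AntitoneOn q (Icc 0 1) := by
    refine antitoneOn_of_hasDerivWithinAt_nonpos (convex_Icc 0 1)
      (fun s _ => (hq s).continuousAt.continuousWithinAt) (fun s _ => (hq s).hasDerivWithinAt) ?_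
    intro s hs
    rw [interior_Icc] at hs
    have hinner : ⟪G (x + s • Δ) - G x, Δ⟫ ≤ s * (L * ‖Δ‖ ^ 2) := calc
      _ ≤ ‖G (x + s • Δ) - G x‖ * ‖Δ‖ := real_inner_le_norm _ _
      _ ≤ L * ‖s • Δ‖ * ‖Δ‖ := by gcongr; simpa using hLip (x + s • Δ) x
      _ = _ := by rw [norm_smul, Real.norm_of_nonneg hs.1.le]; ring
    linarith
  have h10 : q 1 ≤ q 0 :=
    hanti (left_mem_Icc.2 zero_le_one) (right_mem_Icc.2 zero_le_one) zero_le_one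
  simp only [q, Δ, one_smul, zero_smul, add_zero, add_sub_cancel, one_pow, one_mul, zero_mul] at h10
  linarith

theorem StrongConvexOn.add_sq_le_of_isMinOn {s : Set E} {m : ℝ} {f : E → ℝ}
    (hf : StrongConvexOn s m f) {x y : E} (hx : x ∈ s) (hmin : IsMinOn f s x) (hy : y ∈ s) :
    f x + m / 2 * ‖y - x‖ ^ 2 ≤ f y := by
  -- compare `f x` with `f ((1 - θ) • x + θ • y)` and let `θ → 0⁺`
  have key : ∀ θ ∈ Ioo (0 : ℝ) 1, f x + (1 - θ) * (m / 2 * ‖y - x‖ ^ 2) ≤ f y := by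
    rintro θ ⟨hθ0, hθ1⟩
    have h1θ : 0 ≤ 1 - θ := by linarith
    have hstrong := hf.2 hx hy h1θ hθ0.le (sub_add_cancel 1 θ)
    have hxmin := isMinOn_iff.1 hmin _ (hf.1 hx hy h1θ hθ0.le (sub_add_cancel 1 θ))
    rw [norm_sub_rev, smul_eq_mul, smul_eq_mul] at hstrong
    refine le_of_mul_le_mul_left ?_ hθ0
    nlinarith
  have hcont : Continuous fun θ : ℝ => f x + (1 - θ) * (m / 2 * ‖y - x‖ ^ 2) := by fun_prop
  exact le_of_tendsto ((hcont.tendsto' 0 _ (by simp)).mono_left nhdsWithin_le_nhds)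
    (by filter_upwards [Ioo_mem_nhdsGT zero_lt_one] using key)

theorem strongConvexOn_inner_add_mul_norm_sq_add {g : E → ℝ} (hg : ConvexOn ℝ univ g)
    (v x₀ : E) (L : ℝ) :
    StrongConvexOn univ L (fun ξ => ⟪ξ - x₀, v⟫ + L / 2 * ‖ξ - x₀‖ ^ 2 + g ξ) := by
  rw [strongConvexOn_iff_convex]
  refine ((hg.add ((innerSL ℝ (v - L • x₀)).toLinearMap.convexOn convex_univ)).add_const
    (L / 2 * ‖x₀‖ ^ 2 - ⟪x₀, v⟫)).congr fun ξ _ => ?_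
  simp only [Pi.add_apply, ContinuousLinearMap.coe_coe, innerSL_apply_apply]
  rw [norm_sub_sq_real, inner_sub_left, inner_sub_left, real_inner_smul_left, real_inner_comm v ξ,
    real_inner_comm x₀ ξ]
  ring

theorem inner_add_mul_norm_sq_add_le_of_forall_le {g : E → ℝ} (hg : ConvexOn ℝ univ g)
    {v x₀ x₁ : E} {L : ℝ} (hmin : ∀ ξ, ⟪x₁ - x₀, v⟫ + L / 2 * ‖x₁ - x₀‖ ^ 2 + g x₁
      ≤ ⟪ξ - x₀, v⟫ + L / 2 * ‖ξ - x₀‖ ^ 2 + g ξ) :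
    ⟪x₁ - x₀, v⟫ + L * ‖x₁ - x₀‖ ^ 2 + g x₁ ≤ g x₀ := by
  have := (strongConvexOn_inner_add_mul_norm_sq_add hg v x₀ L).add_sq_le_of_isMinOn (mem_univ x₁)
    (fun ξ _ => hmin ξ) (mem_univ x₀)
  rw [norm_sub_rev x₀ x₁, sub_self, inner_zero_left, norm_zero] at this
  linarith

end InnerProductSpace

theorem sum_apply_update {ι γ : Type*} [Fintype ι] [DecidableEq ι] [AddCommGroup γ]
    {β : ι → Type*} (g : ∀ i, β i → γ) (x : ∀ i, β i) (j : ι) (b : β j) :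
    ∑ i, g i (update x j b i) = ∑ i, g i (x i) + (g j b - g j (x j)) := by
  simp_rw [apply_update g x j b]
  rw [Finset.sum_update_of_mem (Finset.mem_univ j), ← Finset.add_sum_erase _ _ (Finset.mem_univ j),
    Finset.sdiff_singleton_eq_erase]
  abel

theorem PiLp.inf'_div_two_mul_norm_sq_le {ι : Type*} [Fintype ι] [Nonempty ι] {β : ι → Type*}
    [∀ i, SeminormedAddCommGroup (β i)] (L : ι → ℝ) (x : PiLp 2 β) :
    Finset.univ.inf' Finset.univ_nonempty L / 2 * ‖x‖ ^ 2 ≤ ∑ i, L i / 2 * ‖x i‖ ^ 2 := by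
  rw [PiLp.norm_sq_eq_of_L2, Finset.mul_sum]
  gcongr with i
  exact Finset.inf'_le _ (Finset.mem_univ i)

section BlockStep

variable {ι : Type*} [Fintype ι] [DecidableEq ι] {β : ι → Type*}
  [∀ i, NormedAddCommGroup (β i)] [∀ i, InnerProductSpace ℝ (β i)] [∀ i, CompleteSpace (β i)]

theorem HasGradientAt.comp_update {f : PiLp 2 β → ℝ} {v x : PiLp 2 β} {j : ι} {a : β j}
    (hf : HasGradientAt f v (WithLp.toLp 2 (update x j a))) :
    HasGradientAt (fun b => f (WithLp.toLp 2 (update x j b))) (v j) a := by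
  rw [hasGradientAt_iff_hasFDerivAt] at hf ⊢
  have hupd := (PiLp.continuousLinearEquiv 2 ℝ β).symm.hasFDerivAt.comp a
    (hasFDerivAt_update (𝕜 := ℝ) (WithLp.ofLp x) a)
  refine (hf.comp a hupd).congr_fderiv ?_
  ext b
  simp only [ContinuousLinearMap.comp_apply, InnerProductSpace.toDual_apply_apply, PiLp.inner_apply]
  rw [Finset.sum_eq_single j (fun i _ hi => by simp [Pi.single_eq_of_ne hi]) (by simp)]
  simp

theorem le_sub_of_block_prox_step {f : PiLp 2 β → ℝ} {Df : PiLp 2 β → PiLp 2 β}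
    (hDf : ∀ x, HasGradientAt f (Df x) x) {g : ∀ i, β i → ℝ} {j : ι}
    (hg : ConvexOn ℝ univ (g j)) {L : ℝ} {x : PiLp 2 β}
    (hLip : ∀ a b : β j,
      ‖Df (WithLp.toLp 2 (update x j a)) j - Df (WithLp.toLp 2 (update x j b)) j‖ ≤ L * ‖a - b‖)
    {b : β j} (hb : ∀ ξ, ⟪b - x j, Df x j⟫ + L / 2 * ‖b - x j‖ ^ 2 + g j b
      ≤ ⟪ξ - x j, Df x j⟫ + L / 2 * ‖ξ - x j‖ ^ 2 + g j ξ) :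
    L / 2 * ‖b - x j‖ ^ 2 ≤ (f x + ∑ i, g i (x i))
      - (f (WithLp.toLp 2 (update x j b)) + ∑ i, g i (WithLp.toLp 2 (update x j b) i)) := by
  have hdescent := le_add_inner_add_sq_of_lipschitz_gradient (fun _ => (hDf _).comp_update) hLip
    (x j) b
  have hprox := inner_add_mul_norm_sq_add_le_of_forall_le hg hb
  simp only [update_eq_self, WithLp.toLp_ofLp] at hdescent
  rw [real_inner_comm] at hdescent
  rw [PiLp.toLp_apply, sum_apply_update]
  linarith

end BlockStep

/-- Within a PALM sweep from `x` to `y`, block `j` is updated at the point `blockInterp x y j`. -/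
def blockInterp {p : ℕ} {β : Fin p → Type*} (x y : PiLp 2 β) (n : ℕ) : PiLp 2 β :=
  WithLp.toLp 2 fun i => if (i : ℕ) < n then y i else x i

section BlockInterp

variable {p : ℕ} {β : Fin p → Type*} (x y : PiLp 2 β)

@[simp]
theorem blockInterp_zero : blockInterp x y 0 = x := by
  ext i
  simp [blockInterp]

@[simp]
theorem blockInterp_length : blockInterp x y p = y := by
  ext i
  simp [blockInterp]

theorem blockInterp_apply_self (j : Fin p) : blockInterp x y j j = x j := by
  simp [blockInterp]

theorem blockInterp_succ (j : Fin p) :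
    blockInterp x y (j + 1) = WithLp.toLp 2 (update (blockInterp x y j) j (y j)) := by
  ext i
  rcases eq_or_ne i j with rfl | hij
  · simp [blockInterp]
  · have hlt : (i : ℕ) < j + 1 ↔ (i : ℕ) < j := by
      have := Fin.val_ne_of_ne hij
      omega
    simp only [blockInterp, WithLp.ofLp_toLp, update_of_ne hij, hlt]

end BlockInterp

theorem stmt15_general {p : ℕ} [NeZero p] {d : Fin p → ℕ}
    (f : PiLp 2 (fun j : Fin p => EuclideanSpace ℝ (Fin (d j))) → ℝ)
    (Df : PiLp 2 (fun j : Fin p => EuclideanSpace ℝ (Fin (d j))) →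
      PiLp 2 (fun j : Fin p => EuclideanSpace ℝ (Fin (d j))))
    (hDf : ∀ x, HasGradientAt f (Df x) x)
    (g : (j : Fin p) → EuclideanSpace ℝ (Fin (d j)) → ℝ)
    (hgconv : ∀ j, ConvexOn ℝ Set.univ (g j))
    (Lc : Fin p → ℝ)
    (hpartialLip : ∀ (j : Fin p) (x : PiLp 2 (fun j : Fin p => EuclideanSpace ℝ (Fin (d j))))
      (a b : EuclideanSpace ℝ (Fin (d j))),
      ‖Df (WithLp.toLp 2 (Function.update x j a)) j - Df (WithLp.toLp 2 (Function.update x j b)) j‖ ≤ Lc j * ‖a - b‖)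
    (X : ℕ → PiLp 2 (fun j : Fin p => EuclideanSpace ℝ (Fin (d j))))
    (H : ℕ → Fin p → PiLp 2 (fun j : Fin p => EuclideanSpace ℝ (Fin (d j))))
    (hH : ∀ t (j i : Fin p),
      H t j i = if (i : ℕ) < (j : ℕ) then X (t+1) i else X t i)
    (hupdate : ∀ t (j : Fin p), ∀ ξ : EuclideanSpace ℝ (Fin (d j)),
      ⟪X (t+1) j - X t j, Df (H t j) j⟫ + (Lc j / 2) * ‖X (t+1) j - X t j‖^2
          + g j (X (t+1) j)
        ≤ ⟪ξ - X t j, Df (H t j) j⟫ + (Lc j / 2) * ‖ξ - X t j‖^2 + g j ξ) :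
    ∀ t, (Finset.univ.inf' Finset.univ_nonempty Lc / 2) * ‖X t - X (t+1)‖^2
      ≤ (f (X t) + ∑ j, g j (X t j)) - (f (X (t+1)) + ∑ j, g j (X (t+1) j)) := by
  intro t
  let φ : PiLp 2 (fun j : Fin p => EuclideanSpace ℝ (Fin (d j))) → ℝ :=
    fun x => f x + ∑ j, g j (x j)
  let Y := blockInterp (X t) (X (t+1))
  have hstep : ∀ j : Fin p, Lc j / 2 * ‖(X t - X (t+1)) j‖ ^ 2 ≤ φ (Y j) - φ (Y (j + 1)) := by
    intro j
    have hHY : H t j = Y j := by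
      ext i
      simp [hH, Y, blockInterp]
    have hprox := hupdate t j
    rw [hHY, ← blockInterp_apply_self (X t) (X (t+1)) j] at hprox
    rw [PiLp.sub_apply, norm_sub_rev, ← blockInterp_apply_self (X t) (X (t+1)) j,
      show Y (j + 1) = _ from blockInterp_succ (X t) (X (t+1)) j]
    exact le_sub_of_block_prox_step hDf (hgconv j) (hpartialLip j (Y j)) hprox
  calc _ ≤ ∑ j, Lc j / 2 * ‖(X t - X (t+1)) j‖ ^ 2 := PiLp.inf'_div_two_mul_norm_sq_le Lc _
    _ ≤ ∑ j : Fin p, (φ (Y j) - φ (Y (j + 1))) := Finset.sum_le_sum fun j _ => hstep j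
    _ = φ (Y 0) - φ (Y p) := by
      rw [Fin.sum_univ_eq_sum_range (fun n => φ (Y n) - φ (Y (n + 1))), Finset.sum_range_sub']
    _ = _ := by simp [φ, Y]

/-- PALM sufficient decrease. For `φ(x) = f(x₁,…,x_p) + Σⱼ gⱼ(xⱼ)` with
each partial function of `f` having an `Lⱼ`-Lipschitz partial gradient and each `gⱼ`
convex lsc, the PALM iterates satisfy
`φ(x^{(t)}) − φ(x^{(t+1)}) ≥ (L_min/2)·‖x^{(t)} − x^{(t+1)}‖²`. -/
theorem stmt15 {p : ℕ} [NeZero p] {d : Fin p → ℕ}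
    (f : PiLp 2 (fun j : Fin p => EuclideanSpace ℝ (Fin (d j))) → ℝ)
    (Df : PiLp 2 (fun j : Fin p => EuclideanSpace ℝ (Fin (d j))) →
      PiLp 2 (fun j : Fin p => EuclideanSpace ℝ (Fin (d j))))
    (hDf : ∀ x, HasGradientAt f (Df x) x)
    (hfconv : ConvexOn ℝ Set.univ f)
    (g : (j : Fin p) → EuclideanSpace ℝ (Fin (d j)) → ℝ)
    (hgconv : ∀ j, ConvexOn ℝ Set.univ (g j))
    (hglsc : ∀ j, LowerSemicontinuous (g j))
    (Lc : Fin p → ℝ) (hLc : ∀ j, 0 < Lc j)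
    (hpartialLip : ∀ (j : Fin p) (x : PiLp 2 (fun j : Fin p => EuclideanSpace ℝ (Fin (d j))))
      (a b : EuclideanSpace ℝ (Fin (d j))),
      ‖Df (WithLp.toLp 2 (Function.update x j a)) j - Df (WithLp.toLp 2 (Function.update x j b)) j‖ ≤ Lc j * ‖a - b‖)
    (X : ℕ → PiLp 2 (fun j : Fin p => EuclideanSpace ℝ (Fin (d j))))
    (H : ℕ → Fin p → PiLp 2 (fun j : Fin p => EuclideanSpace ℝ (Fin (d j))))
    (hH : ∀ t (j i : Fin p),
      H t j i = if (i : ℕ) < (j : ℕ) then X (t+1) i else X t i)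
    (hupdate : ∀ t (j : Fin p), ∀ ξ : EuclideanSpace ℝ (Fin (d j)),
      ⟪X (t+1) j - X t j, Df (H t j) j⟫ + (Lc j / 2) * ‖X (t+1) j - X t j‖^2
          + g j (X (t+1) j)
        ≤ ⟪ξ - X t j, Df (H t j) j⟫ + (Lc j / 2) * ‖ξ - X t j‖^2 + g j ξ) :
    ∀ t, (Finset.univ.inf' Finset.univ_nonempty Lc / 2) * ‖X t - X (t+1)‖^2
      ≤ (f (X t) + ∑ j, g j (X t j)) - (f (X (t+1)) + ∑ j, g j (X (t+1) j)) :=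
  stmt15_general f Df hDf g hgconv Lc hpartialLip X H hH hupdate
end

section
/- PALM linear rate: under the PALM setting with f ∈ F^{1,1}_L globally and partial Lipschitz constants Lⱼ, if φ satisfies ‖g‖ ≥ η·√(φ(x) − min φ) for some subgradient bound (res-obj-EB with operator ∂⁰φ, constant η, on Ω containing all iterates), then φ(x^{(t+1)}) − min φ ≤ (η²L_min/(4pL² + 4L_max²) + 1)^{-1}·(φ(x^{(t)}) − min φ) for all t ≥ 0. -/
/-!
A PALM sweep decreases `φ` by at least `(L_min / 2) ‖x⁺ - x‖²`: the block descent lemma bounds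
the increase of `f` along the Gauss–Seidel path, and each prox subproblem is `L_j`-strongly
convex. The optimality conditions of the block subproblems, added to `∇f(x⁺)`, give a subgradient
of `φ` at `x⁺` of norm at most `√(2pL² + 2L_max²) ‖x⁺ - x‖`. The error bound converts this
subgradient into an upper bound on `φ(x⁺) - min φ`, and eliminating `‖x⁺ - x‖` between the
two estimates yields the contraction factor.
-/

open scoped RealInnerProductSpace
open Filter Set Topology

theorem ConvexOn.comp_line {E : Type*} [AddCommGroup E] [Module ℝ E] {f : E → ℝ}
    (hf : ConvexOn ℝ univ f) (x w : E) : ConvexOn ℝ univ (fun s : ℝ => f (x + s • w)) := by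
  refine ⟨convex_univ, fun a _ b _ μ ν hμ hν hμν => ?_⟩
  have hcomb : x + (μ • a + ν • b) • w = μ • (x + a • w) + ν • (x + b • w) := by
    linear_combination (norm := module) -hμν • x
  simpa only [hcomb] using hf.2 (mem_univ _) (mem_univ _) hμ hν hμν

theorem le_inv_mul_of_descent_of_error_bound {a b s r κ C η : ℝ} (hη : 0 ≤ η) (hκ : 0 ≤ κ)
    (hC : 0 < C) (hdesc : a + κ / 2 * s ≤ b) (hrel : r ^ 2 ≤ C / 2 * s) (heb : η * √a ≤ r) :
    a ≤ (η ^ 2 * κ / C + 1)⁻¹ * b := by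
  have hsq : η ^ 2 * a ≤ C / 2 * s := by
    -- for `a < 0` the hypothesis `heb` is void (`√a = 0`), but then `η ^ 2 * a ≤ 0 ≤ r ^ 2`
    rcases le_or_gt 0 a with ha | ha
    · calc η ^ 2 * a = (η * √a) ^ 2 := by rw [mul_pow, Real.sq_sqrt ha]
        _ ≤ r ^ 2 := pow_le_pow_left₀ (by positivity) heb 2
        _ ≤ C / 2 * s := hrel
    · nlinarith [sq_nonneg η, sq_nonneg r]
  have hkey : (η ^ 2 * κ + C) * a ≤ C * b := by nlinarith [mul_le_mul_of_nonneg_left hsq hκ]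
  rw [inv_mul_eq_div, le_div_iff₀ (by positivity)]
  field_simp
  linarith

section Subgradient

variable {E : Type*} [NormedAddCommGroup E] [InnerProductSpace ℝ E]

def HasSubgradient (f : E → ℝ) (v x : E) : Prop := ∀ y, f x + ⟪v, y - x⟫ ≤ f y

variable [CompleteSpace E]

theorem HasGradientAt.hasDerivAt_comp_line {f : E → ℝ} {v x w : E} {t : ℝ}
    (hf : HasGradientAt f v (x + t • w)) :
    HasDerivAt (fun s : ℝ => f (x + s • w)) ⟪v, w⟫ t := by
  have hline : HasDerivAt (fun s : ℝ => x + s • w) w t := by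
    simpa using ((hasDerivAt_id t).smul_const w).const_add x
  simpa [Function.comp_def] using hf.hasFDerivAt.comp_hasDerivAt t hline

theorem ConvexOn.hasSubgradient_of_hasGradientAt {f : E → ℝ} {v x : E}
    (hf : ConvexOn ℝ univ f) (hv : HasGradientAt f v x) : HasSubgradient f v x := by
  intro y
  have hslope := (hf.comp_line x (y - x)).le_slope_of_hasDerivAt (mem_univ 0) (mem_univ 1)
    zero_lt_one (HasGradientAt.hasDerivAt_comp_line (by simpa using hv))
  simp only [slope_def_field, zero_smul, add_zero, one_smul, add_sub_cancel, sub_zero,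
    div_one] at hslope
  linarith

theorem ConvexOn.hasSubgradient_neg_of_forall_add_le {q g : E → ℝ} {w x : E}
    (hg : ConvexOn ℝ univ g) (hq : HasGradientAt q w x) (hmin : ∀ y, q x + g x ≤ q y + g y) :
    HasSubgradient g (-w) x := by
  intro y
  have hslope := (HasGradientAt.hasDerivAt_comp_line (w := y - x) (t := 0)
    (by simpa using hq)).tendsto_slope_zero_right
  have hbound : ∀ᶠ t in 𝓝[>] (0:ℝ),
      g x - g y ≤ t⁻¹ • (q (x + (0 + t) • (y - x)) - q (x + (0:ℝ) • (y - x))) := by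
    filter_upwards [Ioc_mem_nhdsGT zero_lt_one] with t ⟨ht0, ht1⟩
    have hconv := (hg.comp_line x (y - x)).2 (mem_univ 0) (mem_univ 1) (sub_nonneg.2 ht1)
      ht0.le (sub_add_cancel 1 t)
    have hopt := hmin (x + t • (y - x))
    simp only [smul_eq_mul, mul_zero, mul_one, zero_add, zero_smul, add_zero, one_smul,
      add_sub_cancel] at hconv hopt ⊢
    rw [le_inv_mul_iff₀ ht0]
    nlinarith
  have := ge_of_tendsto hslope hbound
  rw [inner_neg_left]
  linarith

theorem hasGradientAt_inner_sub_add_norm_sub_sq (x a y : E) (c : ℝ) :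
    HasGradientAt (fun z => ⟪z - x, a⟫ + c / 2 * ‖z - x‖ ^ 2) (a + c • (y - x)) y := by
  have hsub := (hasFDerivAt_id (𝕜 := ℝ) y).sub_const x
  rw [hasGradientAt_iff_hasFDerivAt]
  refine ((hsub.inner ℝ (hasFDerivAt_const a y)).add
    (hsub.norm_sq.const_mul (c / 2))).congr_fderiv ?_
  ext h
  simp [fderivInnerCLM_apply, real_inner_comm, ← mul_assoc]

theorem le_add_inner_add_sq_of_gradient_lipschitz {F : E → ℝ} {G : E → E} {L : ℝ}
    (hF : ∀ x, HasGradientAt F (G x) x) (hG : ∀ x y, ‖G x - G y‖ ≤ L * ‖x - y‖) (x y : E) :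
    F y ≤ F x + ⟪G x, y - x⟫ + L / 2 * ‖y - x‖ ^ 2 := by
  set w := y - x
  let χ : ℝ → ℝ := fun s => F (x + s • w) - s * ⟪G x, w⟫ - L / 2 * ‖w‖ ^ 2 * s ^ 2
  have hχ : ∀ s, HasDerivAt χ (⟪G (x + s • w), w⟫ - ⟪G x, w⟫ - L * ‖w‖ ^ 2 * s) s := by
    intro s
    refine (((hF (x + s • w)).hasDerivAt_comp_line.sub
      ((hasDerivAt_id' s).mul_const ⟪G x, w⟫)).sub
      ((hasDerivAt_pow 2 s).const_mul (L / 2 * ‖w‖ ^ 2))).congr_deriv ?_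
    push_cast
    ring
  have hχ' : ∀ s ∈ interior (Icc (0:ℝ) 1),
      ⟪G (x + s • w), w⟫ - ⟪G x, w⟫ - L * ‖w‖ ^ 2 * s ≤ 0 := by
    intro s hs
    rw [interior_Icc] at hs
    suffices ⟪G (x + s • w), w⟫ - ⟪G x, w⟫ ≤ L * ‖w‖ ^ 2 * s by linarith
    calc ⟪G (x + s • w), w⟫ - ⟪G x, w⟫ = ⟪G (x + s • w) - G x, w⟫ := (inner_sub_left ..).symm
      _ ≤ ‖G (x + s • w) - G x‖ * ‖w‖ := real_inner_le_norm _ _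
      _ ≤ L * ‖s • w‖ * ‖w‖ := by gcongr; simpa using hG (x + s • w) x
      _ = L * ‖w‖ ^ 2 * s := by rw [norm_smul, Real.norm_of_nonneg hs.1.le]; ring
  have hanti := antitoneOn_of_hasDerivWithinAt_nonpos (convex_Icc (0:ℝ) 1)
    (fun s _ => (hχ s).continuousAt.continuousWithinAt) (fun s _ => (hχ s).hasDerivWithinAt) hχ'
  have h01 := hanti (left_mem_Icc.2 zero_le_one) (right_mem_Icc.2 zero_le_one) zero_le_one
  simp only [χ, w, zero_smul, add_zero, zero_mul, sub_zero, one_smul, add_sub_cancel, one_mul,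
    one_pow, mul_one, ne_eq, OfNat.ofNat_ne_zero, not_false_eq_true, zero_pow] at h01
  linarith

end Subgradient

section Blocks

variable {ι : Type*} [Fintype ι] {β : ι → Type*} [∀ i, NormedAddCommGroup (β i)]

theorem PiLp.norm_sq_le_of_forall_norm_apply_le {y z : PiLp 2 β} {A B : ℝ}
    (h : ∀ i, ‖y i‖ ≤ A + B * ‖z i‖) :
    ‖y‖ ^ 2 ≤ 2 * Fintype.card ι * A ^ 2 + 2 * B ^ 2 * ‖z‖ ^ 2 := by
  rw [PiLp.norm_sq_eq_of_L2, PiLp.norm_sq_eq_of_L2, Finset.mul_sum]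
  calc ∑ i, ‖y i‖ ^ 2 ≤ ∑ i, (2 * A ^ 2 + 2 * B ^ 2 * ‖z i‖ ^ 2) := by
        gcongr with i
        nlinarith [h i, norm_nonneg (y i), sq_nonneg (A - B * ‖z i‖)]
    _ = 2 * Fintype.card ι * A ^ 2 + ∑ i, 2 * B ^ 2 * ‖z i‖ ^ 2 := by
        rw [Finset.sum_add_distrib, Finset.sum_const, Finset.card_univ, nsmul_eq_mul]
        ring

variable [∀ i, InnerProductSpace ℝ (β i)]

def blockComposite (f : PiLp 2 β → ℝ) (g : ∀ i, β i → ℝ) (x : PiLp 2 β) : ℝ :=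
  f x + ∑ i, g i (x i)

theorem hasSubgradient_blockComposite {f : PiLp 2 β → ℝ} {g : ∀ i, β i → ℝ} {v x : PiLp 2 β}
    {u : ∀ i, β i} (hf : HasSubgradient f v x) (hg : ∀ i, HasSubgradient (g i) (u i) (x i)) :
    HasSubgradient (blockComposite f g) (v + WithLp.toLp 2 u) x := by
  intro y
  have hsum := Finset.sum_le_sum fun i (_ : i ∈ Finset.univ) => hg i (y i)
  rw [Finset.sum_add_distrib] at hsum
  have hinner : ⟪v + WithLp.toLp 2 u, y - x⟫ = ⟪v, y - x⟫ + ∑ i, ⟪u i, y i - x i⟫ := by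
    rw [inner_add_left, PiLp.inner_apply (WithLp.toLp 2 u)]
    rfl
  simp only [blockComposite, hinner]
  linarith [hf y]

variable [DecidableEq ι] [∀ i, CompleteSpace (β i)]

theorem HasGradientAt.comp_toLp_update {f : PiLp 2 β → ℝ} {v : PiLp 2 β} (x : PiLp 2 β) (j : ι)
    {c : β j} (hf : HasGradientAt f v (WithLp.toLp 2 (Function.update x j c))) :
    HasGradientAt (fun c => f (WithLp.toLp 2 (Function.update x j c))) (v j) c := by
  have hupd := (PiLp.continuousLinearEquiv 2 ℝ β).symm.hasFDerivAt.comp c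
    (hasFDerivAt_update (𝕜 := ℝ) (WithLp.ofLp x) c)
  rw [hasGradientAt_iff_hasFDerivAt]
  refine (hf.hasFDerivAt.comp c hupd).congr_fderiv ?_
  ext h
  simp only [ContinuousLinearMap.comp_apply, InnerProductSpace.toDual_apply_apply,
    PiLp.inner_apply]
  rw [Finset.sum_eq_single j (fun i _ hi => by simp [Pi.single_eq_of_ne hi]) (by simp)]
  simp

end Blocks

section PALM

variable {p : ℕ} {β : Fin p → Type*}

/-- Block `j` of a sweep (blocks counted from `0`) is linearized at `blockMix x y j`, in which the
blocks before `j` are already updated. -/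
def blockMix (x y : PiLp 2 β) (k : ℕ) : PiLp 2 β :=
  WithLp.toLp 2 fun i => if (i : ℕ) < k then y i else x i

theorem blockMix_zero (x y : PiLp 2 β) : blockMix x y 0 = x := by
  ext i; simp [blockMix]

theorem blockMix_length (x y : PiLp 2 β) : blockMix x y p = y := by
  ext i; simp [blockMix]

theorem blockMix_succ (x y : PiLp 2 β) (j : Fin p) :
    blockMix x y (j + 1) = WithLp.toLp 2 (Function.update (blockMix x y j) j (y j)) := by
  ext i
  rcases eq_or_ne i j with rfl | hij
  · simp [blockMix]
  · have : (i : ℕ) < j + 1 ↔ (i : ℕ) < j := by have := Fin.val_ne_of_ne hij; omega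
    simp only [blockMix, PiLp.toLp_apply, Function.update_of_ne hij, this]

theorem toLp_update_blockMix (x y : PiLp 2 β) (j : Fin p) :
    WithLp.toLp 2 (Function.update (blockMix x y j) j (x j)) = blockMix x y j := by
  ext i
  rcases eq_or_ne i j with rfl | hij
  · simp [blockMix]
  · simp [Function.update_of_ne hij]

theorem sum_sub_blockMix {M : Type*} [AddCommGroup M] (F : PiLp 2 β → M) (x y : PiLp 2 β) :
    ∑ j : Fin p, (F (blockMix x y (j + 1)) - F (blockMix x y j)) = F y - F x := by
  rw [Fin.sum_univ_eq_sum_range (fun k => F (blockMix x y (k + 1)) - F (blockMix x y k)),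
    Finset.sum_range_sub (fun k => F (blockMix x y k)), blockMix_length, blockMix_zero]

variable [∀ i, NormedAddCommGroup (β i)]

theorem norm_sub_blockMix_le (x y : PiLp 2 β) (k : ℕ) : ‖y - blockMix x y k‖ ≤ ‖y - x‖ := by
  rw [← sq_le_sq₀ (norm_nonneg _) (norm_nonneg _), PiLp.norm_sq_eq_of_L2,
    PiLp.norm_sq_eq_of_L2]
  gcongr with i
  simp only [PiLp.sub_apply, blockMix]
  split_ifs <;> simp

variable [∀ i, InnerProductSpace ℝ (β i)]

def IsPalmStep (Df : PiLp 2 β → PiLp 2 β) (g : ∀ j, β j → ℝ) (Lc : Fin p → ℝ)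
    (x y : PiLp 2 β) : Prop :=
  ∀ (j : Fin p) (ξ : β j),
    ⟪y j - x j, Df (blockMix x y j) j⟫ + Lc j / 2 * ‖y j - x j‖ ^ 2 + g j (y j)
      ≤ ⟪ξ - x j, Df (blockMix x y j) j⟫ + Lc j / 2 * ‖ξ - x j‖ ^ 2 + g j ξ

/-- `∇f(y)` plus, in block `j`, the subgradient of `g j` given by the optimality condition of the
`j`-th prox step. -/
def palmSubgradient (Df : PiLp 2 β → PiLp 2 β) (Lc : Fin p → ℝ) (x y : PiLp 2 β) : PiLp 2 β :=
  Df y + WithLp.toLp 2 fun (j : Fin p) => -(Df (blockMix x y j) j + Lc j • (y j - x j))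

variable {f : PiLp 2 β → ℝ} {Df : PiLp 2 β → PiLp 2 β} {g : ∀ j, β j → ℝ} {Lc : Fin p → ℝ}
  {x y : PiLp 2 β}

theorem norm_palmSubgradient_sq_le {L Λ : ℝ} (hLip : ∀ x y, ‖Df x - Df y‖ ≤ L * ‖x - y‖)
    (hL : 0 ≤ L) (hLc : ∀ j, 0 ≤ Lc j) (hΛ : ∀ j, Lc j ≤ Λ) (x y : PiLp 2 β) :
    ‖palmSubgradient Df Lc x y‖ ^ 2 ≤ 2 * p * (L * ‖y - x‖) ^ 2 + 2 * Λ ^ 2 * ‖y - x‖ ^ 2 := by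
  simpa using PiLp.norm_sq_le_of_forall_norm_apply_le (y := palmSubgradient Df Lc x y)
    (z := y - x) (A := L * ‖y - x‖) (B := Λ) fun j => calc
      ‖palmSubgradient Df Lc x y j‖
          = ‖(Df y - Df (blockMix x y j)) j - Lc j • (y - x) j‖ := by
        simp only [palmSubgradient, PiLp.add_apply, PiLp.sub_apply]
        congr 1
        abel
      _ ≤ ‖Df y - Df (blockMix x y j)‖ + Lc j * ‖(y - x) j‖ := by
        grw [norm_sub_le, PiLp.norm_apply_le, norm_smul, Real.norm_of_nonneg (hLc j)]
      _ ≤ L * ‖y - x‖ + Λ * ‖(y - x) j‖ := by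
        grw [hLip, norm_sub_blockMix_le, hΛ j]

variable [∀ i, CompleteSpace (β i)]

theorem le_add_sum_inner_add_sq_of_partial_lipschitz (hDf : ∀ x, HasGradientAt f (Df x) x)
    (hpartialLip : ∀ (j : Fin p) (x : PiLp 2 β) (a b : β j),
      ‖Df (WithLp.toLp 2 (Function.update x j a)) j
        - Df (WithLp.toLp 2 (Function.update x j b)) j‖ ≤ Lc j * ‖a - b‖)
    (x y : PiLp 2 β) :
    f y ≤ f x + ∑ j : Fin p,
      (⟪Df (blockMix x y j) j, y j - x j⟫ + Lc j / 2 * ‖y j - x j‖ ^ 2) := by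
  have hstep : ∀ j : Fin p, f (blockMix x y (j + 1)) - f (blockMix x y j)
      ≤ ⟪Df (blockMix x y j) j, y j - x j⟫ + Lc j / 2 * ‖y j - x j‖ ^ 2 := by
    intro j
    have h := le_add_inner_add_sq_of_gradient_lipschitz
      (fun c => (hDf _).comp_toLp_update (blockMix x y j) j) (hpartialLip j (blockMix x y j))
      (x j) (y j)
    rw [toLp_update_blockMix] at h
    rw [blockMix_succ]
    linarith
  linarith [Finset.sum_le_sum fun j (_ : j ∈ Finset.univ) => hstep j, sum_sub_blockMix f x y]

theorem IsPalmStep.hasSubgradient_block (h : IsPalmStep Df g Lc x y)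
    (hgconv : ∀ j, ConvexOn ℝ univ (g j)) (j : Fin p) :
    HasSubgradient (g j) (-(Df (blockMix x y j) j + Lc j • (y j - x j))) (y j) :=
  (hgconv j).hasSubgradient_neg_of_forall_add_le
    (hasGradientAt_inner_sub_add_norm_sub_sq _ _ _ _) (by simpa only [real_inner_comm] using h j)

theorem IsPalmStep.add_sq_le (h : IsPalmStep Df g Lc x y) (hDf : ∀ x, HasGradientAt f (Df x) x)
    (hgconv : ∀ j, ConvexOn ℝ univ (g j))
    (hpartialLip : ∀ (j : Fin p) (x : PiLp 2 β) (a b : β j),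
      ‖Df (WithLp.toLp 2 (Function.update x j a)) j
        - Df (WithLp.toLp 2 (Function.update x j b)) j‖ ≤ Lc j * ‖a - b‖)
    {κ : ℝ} (hκ : ∀ j, κ ≤ Lc j) :
    blockComposite f g y + κ / 2 * ‖y - x‖ ^ 2 ≤ blockComposite f g x := by
  have hblock : ∀ j : Fin p, g j (y j) + ⟪Df (blockMix x y j) j, y j - x j⟫
      + κ / 2 * ‖y j - x j‖ ^ 2 + Lc j / 2 * ‖y j - x j‖ ^ 2 ≤ g j (x j) := by
    intro j
    have hsub := h.hasSubgradient_block hgconv j (x j)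
    have hinner : ⟪-(Df (blockMix x y j) j + Lc j • (y j - x j)), x j - y j⟫
        = ⟪Df (blockMix x y j) j, y j - x j⟫ + Lc j * ‖y j - x j‖ ^ 2 := by
      rw [← neg_sub (y j), inner_neg_neg, inner_add_left, real_inner_smul_left,
        real_inner_self_eq_norm_sq]
    nlinarith [hκ j, sq_nonneg ‖y j - x j‖]
  have hsum := Finset.sum_le_sum fun j (_ : j ∈ Finset.univ) => hblock j
  simp only [Finset.sum_add_distrib, ← Finset.mul_sum] at hsum
  rw [PiLp.norm_sq_eq_of_L2]
  simp only [blockComposite, PiLp.sub_apply]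
  have hf := le_add_sum_inner_add_sq_of_partial_lipschitz hDf hpartialLip x y
  rw [Finset.sum_add_distrib] at hf
  linarith

theorem IsPalmStep.hasSubgradient (h : IsPalmStep Df g Lc x y)
    (hDf : ∀ x, HasGradientAt f (Df x) x) (hfconv : ConvexOn ℝ univ f)
    (hgconv : ∀ j, ConvexOn ℝ univ (g j)) :
    HasSubgradient (blockComposite f g) (palmSubgradient Df Lc x y) y :=
  hasSubgradient_blockComposite (hfconv.hasSubgradient_of_hasGradientAt (hDf y))
    (h.hasSubgradient_block hgconv)

end PALM

theorem stmt16_general {p : ℕ} [NeZero p] {d : Fin p → ℕ}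
    (f : PiLp 2 (fun j : Fin p => EuclideanSpace ℝ (Fin (d j))) → ℝ)
    (Df : PiLp 2 (fun j : Fin p => EuclideanSpace ℝ (Fin (d j))) →
      PiLp 2 (fun j : Fin p => EuclideanSpace ℝ (Fin (d j))))
    (hDf : ∀ x, HasGradientAt f (Df x) x)
    (hfconv : ConvexOn ℝ Set.univ f)
    (L : ℝ) (hL : 0 < L)
    (hLip : ∀ x y, ‖Df x - Df y‖ ≤ L * ‖x - y‖)
    (g : (j : Fin p) → EuclideanSpace ℝ (Fin (d j)) → ℝ)
    (hgconv : ∀ j, ConvexOn ℝ Set.univ (g j))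
    (Lc : Fin p → ℝ) (hLc : ∀ j, 0 < Lc j)
    (hpartialLip : ∀ (j : Fin p) (x : PiLp 2 (fun j : Fin p => EuclideanSpace ℝ (Fin (d j))))
      (a b : EuclideanSpace ℝ (Fin (d j))),
      ‖Df (WithLp.toLp 2 (Function.update x j a)) j - Df (WithLp.toLp 2 (Function.update x j b)) j‖ ≤ Lc j * ‖a - b‖)
    (m : ℝ)
    (Ω : Set (PiLp 2 (fun j : Fin p => EuclideanSpace ℝ (Fin (d j)))))
    (η : ℝ) (hη : 0 < η)
    (hEB : ∀ x ∈ Ω, ∀ v : PiLp 2 (fun j : Fin p => EuclideanSpace ℝ (Fin (d j))),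
      (∀ z, (f x + ∑ j, g j (x j)) + ⟪v, z - x⟫ ≤ f z + ∑ j, g j (z j)) →
      η * Real.sqrt ((f x + ∑ j, g j (x j)) - m) ≤ ‖v‖)
    (X : ℕ → PiLp 2 (fun j : Fin p => EuclideanSpace ℝ (Fin (d j))))
    (hXΩ : ∀ t, X t ∈ Ω)
    (H : ℕ → Fin p → PiLp 2 (fun j : Fin p => EuclideanSpace ℝ (Fin (d j))))
    (hH : ∀ t (j i : Fin p),
      H t j i = if (i : ℕ) < (j : ℕ) then X (t+1) i else X t i)
    (hupdate : ∀ t (j : Fin p), ∀ ξ : EuclideanSpace ℝ (Fin (d j)),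
      ⟪X (t+1) j - X t j, Df (H t j) j⟫ + (Lc j / 2) * ‖X (t+1) j - X t j‖^2
          + g j (X (t+1) j)
        ≤ ⟪ξ - X t j, Df (H t j) j⟫ + (Lc j / 2) * ‖ξ - X t j‖^2 + g j ξ) :
    ∀ t, (f (X (t+1)) + ∑ j, g j (X (t+1) j)) - m
      ≤ (η^2 * (Finset.univ.inf' Finset.univ_nonempty Lc)
            / (4*p*L^2 + 4*(Finset.univ.sup' Finset.univ_nonempty Lc)^2) + 1)⁻¹
          * ((f (X t) + ∑ j, g j (X t j)) - m) := by
  intro t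
  have hmix : ∀ j : Fin p, H t j = blockMix (X t) (X (t + 1)) j := fun j =>
    PiLp.ext fun i => hH t j i
  have hstep : IsPalmStep Df g Lc (X t) (X (t + 1)) := fun j ξ => by
    simpa only [hmix] using hupdate t j ξ
  have hdesc := hstep.add_sq_le hDf hgconv hpartialLip
    (κ := Finset.univ.inf' Finset.univ_nonempty Lc) fun j => Finset.inf'_le _ (Finset.mem_univ j)
  have hrel := norm_palmSubgradient_sq_le hLip hL.le (fun j => (hLc j).le)
    (Λ := Finset.univ.sup' Finset.univ_nonempty Lc) (fun j => Finset.le_sup' _ (Finset.mem_univ j))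
    (X t) (X (t + 1))
  have heb := hEB _ (hXΩ (t + 1)) _ (hstep.hasSubgradient hDf hfconv hgconv)
  have hp : (0 : ℝ) < p := Nat.cast_pos.2 (NeZero.pos p)
  refine le_inv_mul_of_descent_of_error_bound hη.le
    ((Finset.le_inf'_iff _ _).2 fun j _ => (hLc j).le) (by positivity)
    (s := ‖X (t + 1) - X t‖ ^ 2) (by simp only [blockComposite] at hdesc; linarith)
    (by linarith) heb

/-- PALM linear rate under the (res-obj-EB) condition with operator
`∂⁰φ` and constant `η` on a set `Ω` containing all iterates:
`φ(x^{(t+1)}) − min φ ≤ (η²L_min/(4pL² + 4L_max²) + 1)⁻¹·(φ(x^{(t)}) − min φ)`.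
The condition `‖∂⁰φ(x)‖ ≥ η·√(φ(x) − min φ)` is expressed by requiring every
subgradient of `φ` at `x ∈ Ω` to have norm at least `η·√(φ(x) − min φ)`. -/
theorem stmt16 {p : ℕ} [NeZero p] {d : Fin p → ℕ}
    (f : PiLp 2 (fun j : Fin p => EuclideanSpace ℝ (Fin (d j))) → ℝ)
    (Df : PiLp 2 (fun j : Fin p => EuclideanSpace ℝ (Fin (d j))) →
      PiLp 2 (fun j : Fin p => EuclideanSpace ℝ (Fin (d j))))
    (hDf : ∀ x, HasGradientAt f (Df x) x)
    (hfconv : ConvexOn ℝ Set.univ f)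
    (L : ℝ) (hL : 0 < L)
    (hLip : ∀ x y, ‖Df x - Df y‖ ≤ L * ‖x - y‖)
    (g : (j : Fin p) → EuclideanSpace ℝ (Fin (d j)) → ℝ)
    (hgconv : ∀ j, ConvexOn ℝ Set.univ (g j))
    (hglsc : ∀ j, LowerSemicontinuous (g j))
    (Lc : Fin p → ℝ) (hLc : ∀ j, 0 < Lc j)
    (hpartialLip : ∀ (j : Fin p) (x : PiLp 2 (fun j : Fin p => EuclideanSpace ℝ (Fin (d j))))
      (a b : EuclideanSpace ℝ (Fin (d j))),
      ‖Df (WithLp.toLp 2 (Function.update x j a)) j - Df (WithLp.toLp 2 (Function.update x j b)) j‖ ≤ Lc j * ‖a - b‖)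
    (m : ℝ) (hm : ∀ x, m ≤ f x + ∑ j, g j (x j)) (hach : ∃ x, f x + ∑ j, g j (x j) = m)
    (Ω : Set (PiLp 2 (fun j : Fin p => EuclideanSpace ℝ (Fin (d j)))))
    (η : ℝ) (hη : 0 < η)
    (hEB : ∀ x ∈ Ω, ∀ v : PiLp 2 (fun j : Fin p => EuclideanSpace ℝ (Fin (d j))),
      (∀ z, (f x + ∑ j, g j (x j)) + ⟪v, z - x⟫ ≤ f z + ∑ j, g j (z j)) →
      η * Real.sqrt ((f x + ∑ j, g j (x j)) - m) ≤ ‖v‖)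
    (X : ℕ → PiLp 2 (fun j : Fin p => EuclideanSpace ℝ (Fin (d j))))
    (hXΩ : ∀ t, X t ∈ Ω)
    (H : ℕ → Fin p → PiLp 2 (fun j : Fin p => EuclideanSpace ℝ (Fin (d j))))
    (hH : ∀ t (j i : Fin p),
      H t j i = if (i : ℕ) < (j : ℕ) then X (t+1) i else X t i)
    (hupdate : ∀ t (j : Fin p), ∀ ξ : EuclideanSpace ℝ (Fin (d j)),
      ⟪X (t+1) j - X t j, Df (H t j) j⟫ + (Lc j / 2) * ‖X (t+1) j - X t j‖^2
          + g j (X (t+1) j)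
        ≤ ⟪ξ - X t j, Df (H t j) j⟫ + (Lc j / 2) * ‖ξ - X t j‖^2 + g j ξ) :
    ∀ t, (f (X (t+1)) + ∑ j, g j (X (t+1) j)) - m
      ≤ (η^2 * (Finset.univ.inf' Finset.univ_nonempty Lc)
            / (4*p*L^2 + 4*(Finset.univ.sup' Finset.univ_nonempty Lc)^2) + 1)⁻¹
          * ((f (X t) + ∑ j, g j (X t j)) - m) :=
  stmt16_general f Df hDf hfconv L hL hLip g hgconv Lc hLc hpartialLip m Ω η hη hEB X hXΩ H hH
    hupdate
end

section
/- Dual problem structure: let g : ℝᵐ → ℝ be real-valued and c-strongly convex, A an n×m matrix (m ≤ n), b in the range of A. Then the primal problem min{g(y) : Ay = b} has a unique solution ȳ, and the dual objective f(x) = g*(Aᵀx) − ⟨b, x⟩ is convex differentiable with (‖A‖²/c)-Lipschitz gradient, and Argmin f = {x : ∇g*(Aᵀx) = ȳ} = {x : Aᵀx ∈ ∂g(ȳ)}. -/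
/-!
Strong convexity makes each tilted function `u ↦ g u - ⟪y, u⟫` coercive, so it has a unique
minimiser `D y`, and `g* y = ⟪y, D y⟫ - g (D y)`. Adding the quadratic growth of the tilted
functions for `y₁` and `y₂` around their minimisers gives `c ‖D y₁ - D y₂‖ ≤ ‖y₁ - y₂‖`, and
then `0 ≤ g* y' - g* y - ⟪D y, y' - y⟫ ≤ ‖y' - y‖² / c`, i.e. `∇g* = D`. Hence the dual
objective has gradient `A (D (Aᵀ x)) - b`. If it vanishes, `D (Aᵀ x)` is feasible and minimises
`g - ⟪Aᵀ x, ·⟫`, which equals `g - ⟪x, b⟫` on the feasible set, so it is the primal solution `ȳ`;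
conversely, weak duality `-g ȳ ≤ f` is an equality at every `x` with `D (Aᵀ x) = ȳ`.
-/

open scoped RealInnerProductSpace InnerProduct
open Set Filter Metric Topology Asymptotics

def subdiff' {E : Type*} [NormedAddCommGroup E] [InnerProductSpace ℝ E]
    (f : E → ℝ) (x : E) : Set E :=
  {v | ∀ z, f x + ⟪v, z - x⟫ ≤ f z}

section InnerProductSpace

variable {E : Type*} [NormedAddCommGroup E] [InnerProductSpace ℝ E]

theorem mem_subdiff'_iff {f : E → ℝ} {x v : E} :
    v ∈ subdiff' f x ↔ IsMinOn (fun z => f z - ⟪v, z⟫) univ x := by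
  simp only [subdiff', mem_ofPred_eq, isMinOn_univ_iff, inner_sub_right]
  exact forall_congr' fun z => by constructor <;> intro h <;> linarith

namespace StrongConvexOn

variable {c : ℝ} {φ : E → ℝ}

theorem sub_inner (hφ : StrongConvexOn univ c φ) (y : E) :
    StrongConvexOn univ c fun u => φ u - ⟪y, u⟫ := by
  have h := UniformConvexOn.sub hφ
    (uniformConcaveOn_zero.2 ((innerₛₗ ℝ y).concaveOn convex_univ))
  rwa [add_zero] at h

theorem eq_of_isMinOn (hc : 0 < c) (hφ : StrongConvexOn univ c φ) {K : Set E}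
    (hK : Convex ℝ K) {u v : E} (hu : IsMinOn φ K u) (hv : IsMinOn φ K v) (huK : u ∈ K)
    (hvK : v ∈ K) : u = v :=
  ((hφ.strictConvexOn hc).subset (subset_univ K) hK).eq_of_isMinOn hu hv huK hvK

-- Strong convexity along `[y₀, u]`, evaluated where the segment leaves the unit ball.
theorem add_mul_le_of_one_le_norm_sub (hφ : StrongConvexOn univ c φ) {y₀ u : E} {m : ℝ}
    (hm : ∀ z ∈ closedBall y₀ 1, m ≤ φ z) (hu : 1 ≤ ‖u - y₀‖) :
    φ y₀ + ‖u - y₀‖ * (m - φ y₀ + c / 2 * (‖u - y₀‖ - 1)) ≤ φ u := by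
  set R := ‖u - y₀‖
  have hR : 0 < R := one_pos.trans_le hu
  have hz : R⁻¹ • u + (1 - R⁻¹) • y₀ ∈ closedBall y₀ 1 := by
    have h : R⁻¹ • u + (1 - R⁻¹) • y₀ - y₀ = R⁻¹ • (u - y₀) := by module
    rw [mem_closedBall, dist_eq_norm, h, norm_smul, norm_inv, Real.norm_of_nonneg hR.le,
      inv_mul_cancel₀ hR.ne']
  have hconv := hφ.2 (mem_univ u) (mem_univ y₀) (inv_nonneg.2 hR.le)
    (sub_nonneg.2 (inv_le_one_of_one_le₀ hu)) (add_sub_cancel _ 1)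
  simp only [smul_eq_mul] at hconv
  have key : R * m ≤ R * (R⁻¹ * φ u + (1 - R⁻¹) * φ y₀ - R⁻¹ * (1 - R⁻¹) * (c / 2 * R ^ 2)) :=
    mul_le_mul_of_nonneg_left ((hm _ hz).trans hconv) hR.le
  have hexp : R * (R⁻¹ * φ u + (1 - R⁻¹) * φ y₀ - R⁻¹ * (1 - R⁻¹) * (c / 2 * R ^ 2))
      = φ u + (R - 1) * φ y₀ - c / 2 * R * (R - 1) := by
    field_simp
  linear_combination key.trans_eq hexp

theorem add_sq_norm_sub_le_of_isMinOn (hφ : StrongConvexOn univ c φ) {u₀ : E}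
    (hmin : IsMinOn φ univ u₀) (u : E) : φ u₀ + c / 2 * ‖u - u₀‖ ^ 2 ≤ φ u := by
  set Q := c / 2 * ‖u - u₀‖ ^ 2
  have key : ∀ t ∈ Ioo (0 : ℝ) 1, φ u₀ + (1 - t) * Q ≤ φ u := by
    rintro t ⟨ht₀, ht₁⟩
    have hconv := hφ.2 (mem_univ u) (mem_univ u₀) ht₀.le (sub_nonneg.2 ht₁.le)
      (add_sub_cancel t 1)
    have hle : φ u₀ ≤ φ (t • u + (1 - t) • u₀) := hmin (mem_univ _)
    simp only [smul_eq_mul] at hconv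
    have : t * (φ u₀ + (1 - t) * Q) ≤ t * φ u := by linear_combination hle.trans hconv
    exact le_of_mul_le_mul_left this ht₀
  have hlim : Tendsto (fun t : ℝ => φ u₀ + (1 - t) * Q) (𝓝[>] 0) (𝓝 (φ u₀ + (1 - 0) * Q)) :=
    (Continuous.tendsto (by fun_prop) 0).mono_left nhdsWithin_le_nhds
  simpa using le_of_tendsto hlim (eventually_of_mem (Ioo_mem_nhdsGT one_pos) key)

variable [FiniteDimensional ℝ E]

theorem continuous (hc : 0 ≤ c) (hφ : StrongConvexOn univ c φ) : Continuous φ :=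
  continuousOn_univ.1 <|
    (UniformConvexOn.convexOn hφ fun r => by positivity).continuousOn isOpen_univ

theorem eventually_le_cocompact (hc : 0 < c) (hφ : StrongConvexOn univ c φ) (y₀ : E) :
    ∀ᶠ u in cocompact E, φ y₀ ≤ φ u := by
  obtain ⟨z₀, -, hz₀⟩ := (isCompact_closedBall y₀ 1).exists_isMinOn
    (nonempty_closedBall.2 zero_le_one) (hφ.continuous hc.le).continuousOn
  -- beyond this radius the bracket in `add_mul_le_of_one_le_norm_sub` is nonnegative
  refine hasBasis_cocompact.eventually_iff.2 ⟨closedBall y₀ (max 1 (1 + 2 * (φ y₀ - φ z₀) / c)),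
    isCompact_closedBall _ _, fun u hu => ?_⟩
  have hR : max 1 (1 + 2 * (φ y₀ - φ z₀) / c) ≤ ‖u - y₀‖ := by
    simp only [mem_compl_iff, mem_closedBall, dist_eq_norm, not_le] at hu
    exact hu.le
  have h₁ : 1 ≤ ‖u - y₀‖ := (le_max_left _ _).trans hR
  have h₂ : φ y₀ - φ z₀ ≤ c / 2 * (‖u - y₀‖ - 1) := by
    have := (le_max_right _ _).trans hR
    rw [← le_sub_iff_add_le', div_le_iff₀ hc] at this
    linarith
  refine le_trans ?_ (hφ.add_mul_le_of_one_le_norm_sub (fun z hz => hz₀ hz) h₁)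
  exact le_add_of_nonneg_right (mul_nonneg (by linarith) (by linarith))

theorem exists_isMinOn (hc : 0 < c) (hφ : StrongConvexOn univ c φ) {K : Set E}
    (hK : IsClosed K) (hne : K.Nonempty) : ∃ u ∈ K, IsMinOn φ K u :=
  (hφ.continuous hc.le).continuousOn.exists_isMinOn' hK hne.some_mem
    ((hφ.eventually_le_cocompact hc _).filter_mono inf_le_left)

end StrongConvexOn

section Conjugate

variable {c : ℝ} {g gs : E → ℝ} {D : E → E}

theorem IsLUB.eq_inner_sub_of_isMinOn {y u₀ : E} {s : ℝ}
    (hs : IsLUB {r | ∃ u, r = ⟪y, u⟫ - g u} s)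
    (hu₀ : IsMinOn (fun u => g u - ⟪y, u⟫) univ u₀) : s = ⟪y, u₀⟫ - g u₀ := by
  refine hs.unique (IsGreatest.isLUB ⟨⟨u₀, rfl⟩, ?_⟩)
  rintro _ ⟨u, rfl⟩
  have h : g u₀ - ⟪y, u₀⟫ ≤ g u - ⟪y, u⟫ := hu₀ (mem_univ u)
  linarith

theorem inner_sub_le_of_isMinOn (hD : ∀ y, IsMinOn (fun u => g u - ⟪y, u⟫) univ (D y))
    (hgs : ∀ y, gs y = ⟪y, D y⟫ - g (D y)) (y u : E) : ⟪y, u⟫ - g u ≤ gs y := by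
  have h : g (D y) - ⟪y, D y⟫ ≤ g u - ⟪y, u⟫ := hD y (mem_univ u)
  rw [hgs]
  linarith

theorem convexOn_of_isMinOn (hD : ∀ y, IsMinOn (fun u => g u - ⟪y, u⟫) univ (D y))
    (hgs : ∀ y, gs y = ⟪y, D y⟫ - g (D y)) : ConvexOn ℝ univ gs := by
  refine ⟨convex_univ, fun p _ q _ a b ha hb hab => ?_⟩
  set u := D (a • p + b • q)
  have hp := mul_le_mul_of_nonneg_left (inner_sub_le_of_isMinOn hD hgs p u) ha
  have hq := mul_le_mul_of_nonneg_left (inner_sub_le_of_isMinOn hD hgs q u) hb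
  rw [hgs, inner_add_left, real_inner_smul_left, real_inner_smul_left, smul_eq_mul, smul_eq_mul]
  linear_combination hp + hq + g u * hab

theorem norm_sub_le_of_isMinOn (hc : 0 < c) (hg : StrongConvexOn univ c g)
    (hD : ∀ y, IsMinOn (fun u => g u - ⟪y, u⟫) univ (D y)) (y₁ y₂ : E) :
    ‖D y₁ - D y₂‖ ≤ c⁻¹ * ‖y₁ - y₂‖ := by
  have h₁ := (hg.sub_inner y₁).add_sq_norm_sub_le_of_isMinOn (hD y₁) (D y₂)
  have h₂ := (hg.sub_inner y₂).add_sq_norm_sub_le_of_isMinOn (hD y₂) (D y₁)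
  have hCS := real_inner_le_norm (y₁ - y₂) (D y₁ - D y₂)
  rw [norm_sub_rev (D y₂)] at h₁
  simp only [inner_sub_left, inner_sub_right] at hCS h₁ h₂
  have hsq : c * ‖D y₁ - D y₂‖ * ‖D y₁ - D y₂‖ ≤ ‖y₁ - y₂‖ * ‖D y₁ - D y₂‖ := by
    linear_combination h₁ + h₂ + hCS
  rw [le_inv_mul_iff₀ hc]
  rcases (norm_nonneg (D y₁ - D y₂)).eq_or_lt with h₀ | h₀
  · rw [← h₀, mul_zero]
    exact norm_nonneg _
  · exact le_of_mul_le_mul_right hsq h₀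

theorem hasGradientAt_of_isMinOn [CompleteSpace E] (hc : 0 < c) (hg : StrongConvexOn univ c g)
    (hD : ∀ y, IsMinOn (fun u => g u - ⟪y, u⟫) univ (D y))
    (hgs : ∀ y, gs y = ⟪y, D y⟫ - g (D y)) (y : E) : HasGradientAt gs (D y) y := by
  have hbound : ∀ y', |gs y' - gs y - ⟪D y, y' - y⟫| ≤ c⁻¹ * ‖y' - y‖ ^ 2 := by
    intro y'
    have h₁ := inner_sub_le_of_isMinOn hD hgs y' (D y)
    have h₂ := inner_sub_le_of_isMinOn hD hgs y (D y')
    have hCS := real_inner_le_norm (y' - y) (D y' - D y)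
    have hLip : ‖y' - y‖ * ‖D y' - D y‖ ≤ c⁻¹ * ‖y' - y‖ ^ 2 := by
      nlinarith [norm_sub_le_of_isMinOn hc hg hD y' y, norm_nonneg (y' - y)]
    simp only [hgs] at h₁ h₂ ⊢
    simp only [inner_sub_left, inner_sub_right, real_inner_comm y, real_inner_comm y'] at hCS ⊢
    rw [abs_le]
    constructor <;> nlinarith [sq_nonneg ‖y' - y‖, inv_pos.2 hc]
  rw [hasGradientAt_iff_isLittleO]
  refine IsBigO.trans_isLittleO (g := fun y' => ‖y' - y‖ ^ 2) ?_ ?_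
  · exact IsBigO.of_bound c⁻¹ (Eventually.of_forall fun y' => by simpa using hbound y')
  · exact (isLittleO_norm_pow_id one_lt_two).comp_tendsto (tendsto_sub_nhds_zero_iff.2 tendsto_id)

theorem eq_iff_mem_subdiff' (hc : 0 < c) (hg : StrongConvexOn univ c g)
    (hD : ∀ y, IsMinOn (fun u => g u - ⟪y, u⟫) univ (D y)) (y u : E) :
    D y = u ↔ y ∈ subdiff' g u := by
  rw [mem_subdiff'_iff]
  refine ⟨fun h => h ▸ hD y, fun hu => ?_⟩
  exact (hg.sub_inner y).eq_of_isMinOn hc convex_univ (hD y) hu (mem_univ _) (mem_univ _)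

end Conjugate

end InnerProductSpace

section Dual

variable {E F : Type*} [NormedAddCommGroup E] [InnerProductSpace ℝ E] [CompleteSpace E]
  [NormedAddCommGroup F] [InnerProductSpace ℝ F] [CompleteSpace F] (A : E →L[ℝ] F) (b : F)

noncomputable def dualObjective (f : E → ℝ) (x : F) : ℝ :=
  f ((A†) x) - ⟪b, x⟫

theorem hasGradientAt_dualObjective {f : E → ℝ} {f' : E} {x : F}
    (hf : HasGradientAt f f' ((A†) x)) : HasGradientAt (dualObjective A b f) (A f' - b) x := by
  rw [hasGradientAt_iff_hasFDerivAt] at hf ⊢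
  refine ((hf.comp x (A†).hasFDerivAt).sub (innerSL ℝ b).hasFDerivAt).congr_fderiv ?_
  ext v
  simp [ContinuousLinearMap.adjoint_inner_right]

theorem norm_map_comp_adjoint_sub_le {D : E → E} {L : ℝ} (hL : 0 ≤ L)
    (hD : ∀ u v, ‖D u - D v‖ ≤ L * ‖u - v‖) (x y : F) :
    ‖A (D ((A†) x)) - A (D ((A†) y))‖ ≤ ‖A‖ ^ 2 * L * ‖x - y‖ := by
  rw [← map_sub]
  calc ‖A (D ((A†) x) - D ((A†) y))‖ ≤ ‖A‖ * (L * ‖(A†) x - (A†) y‖) :=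
        (A.le_opNorm _).trans (by gcongr; exact hD _ _)
    _ ≤ ‖A‖ * (L * (‖A†‖ * ‖x - y‖)) := by
        rw [← map_sub]
        gcongr
        exact (A†).le_opNorm _
    _ = ‖A‖ ^ 2 * L * ‖x - y‖ := by
        rw [ContinuousLinearMap.adjoint.norm_map]
        ring

theorem convexOn_dualObjective {f : E → ℝ} (hf : ConvexOn ℝ univ f) :
    ConvexOn ℝ univ (dualObjective A b f) :=
  (hf.comp_linearMap (A†).toLinearMap).sub ((innerₛₗ ℝ b).concaveOn convex_univ)

variable {g gs : E → ℝ} {D : E → E}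

theorem neg_le_dualObjective (hD : ∀ y, IsMinOn (fun u => g u - ⟪y, u⟫) univ (D y))
    (hgs : ∀ y, gs y = ⟪y, D y⟫ - g (D y)) {y : E} (hy : A y = b) (x : F) :
    -g y ≤ dualObjective A b gs x := by
  have h := inner_sub_le_of_isMinOn hD hgs ((A†) x) y
  rw [ContinuousLinearMap.adjoint_inner_left, hy, real_inner_comm] at h
  rw [dualObjective]
  linarith

theorem dualObjective_eq_neg (hgs : ∀ y, gs y = ⟪y, D y⟫ - g (D y)) {x : F}
    (hx : A (D ((A†) x)) = b) : dualObjective A b gs x = -g (D ((A†) x)) := by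
  rw [dualObjective, hgs, ContinuousLinearMap.adjoint_inner_left, hx, real_inner_comm]
  ring

theorem isMinOn_of_map_eq (hD : ∀ y, IsMinOn (fun u => g u - ⟪y, u⟫) univ (D y)) {x : F}
    (hx : A (D ((A†) x)) = b) : IsMinOn g {y | A y = b} (D ((A†) x)) := by
  intro y hy
  have h : g (D ((A†) x)) - ⟪(A†) x, D ((A†) x)⟫ ≤ g y - ⟪(A†) x, y⟫ := hD _ (mem_univ y)
  rw [ContinuousLinearMap.adjoint_inner_left, ContinuousLinearMap.adjoint_inner_left, hx,
    show A y = b from hy] at h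
  simpa using h

theorem isMinOn_dualObjective_iff {c : ℝ} (hc : 0 < c) (hg : StrongConvexOn univ c g)
    (hD : ∀ y, IsMinOn (fun u => g u - ⟪y, u⟫) univ (D y))
    (hgs : ∀ y, gs y = ⟪y, D y⟫ - g (D y)) {ybar : E} (hybar : IsMinOn g {y | A y = b} ybar)
    (hAybar : A ybar = b) (x : F) :
    IsMinOn (dualObjective A b gs) univ x ↔ D ((A†) x) = ybar := by
  constructor
  · intro hmin
    have hgrad := hasGradientAt_dualObjective A b
      (hasGradientAt_of_isMinOn hc hg hD hgs ((A†) x))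
    have hzero := (hmin.isLocalMin univ_mem).hasFDerivAt_eq_zero
      (hasGradientAt_iff_hasFDerivAt.1 hgrad)
    have hx : A (D ((A†) x)) = b := by simpa [sub_eq_zero] using hzero
    exact hg.eq_of_isMinOn hc ((convex_singleton b).linear_preimage A.toLinearMap)
      (isMinOn_of_map_eq A b hD hx) hybar hx hAybar
  · intro hx z _
    have hAx : A (D ((A†) x)) = b := hx ▸ hAybar
    simpa [dualObjective_eq_neg A b hgs hAx, hx] using neg_le_dualObjective A b hD hgs hAybar z

end Dual

theorem stmt19_general {mdim n : ℕ}
    (g : EuclideanSpace ℝ (Fin mdim) → ℝ)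
    (c : ℝ) (hc : 0 < c)
    (hg : StrongConvexOn Set.univ c g)
    (A : EuclideanSpace ℝ (Fin mdim) →L[ℝ] EuclideanSpace ℝ (Fin n))
    (b : EuclideanSpace ℝ (Fin n)) (hb : b ∈ Set.range A)
    (gs : EuclideanSpace ℝ (Fin mdim) → ℝ)
    (hgs : ∀ y, IsLUB {r | ∃ u, r = ⟪y, u⟫ - g u} (gs y))
    (fd : EuclideanSpace ℝ (Fin n) → ℝ)
    (hfd : ∀ x, fd x = gs ((ContinuousLinearMap.adjoint A) x) - ⟪b, x⟫) :
    ∃ ybar : EuclideanSpace ℝ (Fin mdim),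
      (A ybar = b ∧ (∀ y, A y = b → g ybar ≤ g y)) ∧
      (∀ y', A y' = b → (∀ y, A y = b → g y' ≤ g y) → y' = ybar) ∧
      ConvexOn ℝ Set.univ fd ∧
      (∃ fd' : EuclideanSpace ℝ (Fin n) → EuclideanSpace ℝ (Fin n),
        (∀ x, HasGradientAt fd (fd' x) x) ∧
        ∀ x y, ‖fd' x - fd' y‖ ≤ (‖A‖^2 / c) * ‖x - y‖) ∧
      (∃ Dgs : EuclideanSpace ℝ (Fin mdim) → EuclideanSpace ℝ (Fin mdim),
        (∀ y, HasGradientAt gs (Dgs y) y) ∧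
        {x | ∀ y, fd x ≤ fd y} = {x | Dgs ((ContinuousLinearMap.adjoint A) x) = ybar} ∧
        {x | ∀ y, fd x ≤ fd y}
          = {x | (ContinuousLinearMap.adjoint A) x ∈ subdiff' g ybar}) := by
  obtain rfl : fd = dualObjective A b gs := funext hfd
  choose D _ hD using fun y => (hg.sub_inner y).exists_isMinOn hc isClosed_univ univ_nonempty
  have hgs : ∀ y, gs y = ⟪y, D y⟫ - g (D y) := fun y => (hgs y).eq_inner_sub_of_isMinOn (hD y)
  have hK : Convex ℝ {y | A y = b} := (convex_singleton b).linear_preimage A.toLinearMap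
  obtain ⟨ybar, hAybar, hybar⟩ :=
    hg.exists_isMinOn hc (isClosed_eq A.continuous continuous_const) hb
  have hargmin : {x | ∀ y, dualObjective A b gs x ≤ dualObjective A b gs y}
      = {x | D ((A†) x) = ybar} := by
    ext x
    simpa only [mem_ofPred_eq, isMinOn_univ_iff] using
      isMinOn_dualObjective_iff A b hc hg hD hgs hybar hAybar x
  refine ⟨ybar, ⟨hAybar, fun y hy => hybar hy⟩,
    fun y' hy' hmin => hg.eq_of_isMinOn hc hK hmin hybar hy' hAybar,
    convexOn_dualObjective A b (convexOn_of_isMinOn hD hgs),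
    ⟨_, fun x => hasGradientAt_dualObjective A b (hasGradientAt_of_isMinOn hc hg hD hgs _),
      fun x y => ?_⟩,
    ⟨D, hasGradientAt_of_isMinOn hc hg hD hgs, hargmin, ?_⟩⟩
  · simpa only [sub_sub_sub_cancel_right, div_eq_mul_inv, mul_right_comm] using
      norm_map_comp_adjoint_sub_le A (inv_nonneg.2 hc.le) (norm_sub_le_of_isMinOn hc hg hD) x y
  · rw [hargmin]
    ext x
    exact eq_iff_mem_subdiff' hc hg hD _ _

/-- Dual problem structure. For `g : ℝᵐ → ℝ` real-valued `c`-strongly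
convex, `A : ℝᵐ → ℝⁿ` linear (`m ≤ n`), `b ∈ range A`, the primal problem
`min {g(y) : Ay = b}` has a unique solution `ȳ`; the dual objective
`f(x) = g*(Aᵀx) − ⟨b, x⟩` is convex and differentiable with `(‖A‖²/c)`-Lipschitz
gradient; and `Argmin f = {x : ∇g*(Aᵀx) = ȳ} = {x : Aᵀx ∈ ∂g(ȳ)}`. -/
theorem stmt19 {mdim n : ℕ} (hmn : mdim ≤ n)
    (g : EuclideanSpace ℝ (Fin mdim) → ℝ)
    (c : ℝ) (hc : 0 < c)
    (hg : StrongConvexOn Set.univ c g)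
    (A : EuclideanSpace ℝ (Fin mdim) →L[ℝ] EuclideanSpace ℝ (Fin n))
    (b : EuclideanSpace ℝ (Fin n)) (hb : b ∈ Set.range A)
    (gs : EuclideanSpace ℝ (Fin mdim) → ℝ)
    (hgs : ∀ y, IsLUB {r | ∃ u, r = ⟪y, u⟫ - g u} (gs y))
    (fd : EuclideanSpace ℝ (Fin n) → ℝ)
    (hfd : ∀ x, fd x = gs ((ContinuousLinearMap.adjoint A) x) - ⟪b, x⟫) :
    ∃ ybar : EuclideanSpace ℝ (Fin mdim),
      (A ybar = b ∧ (∀ y, A y = b → g ybar ≤ g y)) ∧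
      (∀ y', A y' = b → (∀ y, A y = b → g y' ≤ g y) → y' = ybar) ∧
      ConvexOn ℝ Set.univ fd ∧
      (∃ fd' : EuclideanSpace ℝ (Fin n) → EuclideanSpace ℝ (Fin n),
        (∀ x, HasGradientAt fd (fd' x) x) ∧
        ∀ x y, ‖fd' x - fd' y‖ ≤ (‖A‖^2 / c) * ‖x - y‖) ∧
      (∃ Dgs : EuclideanSpace ℝ (Fin mdim) → EuclideanSpace ℝ (Fin mdim),
        (∀ y, HasGradientAt gs (Dgs y) y) ∧
        {x | ∀ y, fd x ≤ fd y} = {x | Dgs ((ContinuousLinearMap.adjoint A) x) = ybar} ∧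
        {x | ∀ y, fd x ≤ fd y}
          = {x | (ContinuousLinearMap.adjoint A) x ∈ subdiff' g ybar}) :=
  stmt19_general g c hc hg A b hb gs hgs fd hfd
end
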